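/- arXiv:1206.3624 — 3 statements merged into one kernel-verified Lean document; each statement's English description precedes it below -/
import Mathlib

section
/- Let ρ : [0,1] → ℝ be a nonnegative integrable function and let 0 < M ≤ K be constants with M ≤ ∫₀¹ ρ(x) dx ≤ K. Then every v ∈ C¹([0,1]) satisfies sup_{x∈[0,1]} |v(x)| ≤ (K/M) (∫₀¹ (v'(x))² dx)^{1/2} + (1/M) |∫₀¹ ρ(x) v(x) dx|. -/
open Real MeasureTheory Set

/-! The oscillation of `v` on `[0,1]` is at most `∫₀¹ |v'| ≤ ‖v'‖_{L²}` (fundamental theorem of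
calculus and Cauchy–Schwarz). Writing `(∫ ρ) v(x) = ∫ ρ v + ∫ ρ(y) (v(x) - v(y)) dy` and using
`ρ ≥ 0`, this gives `M |v(x)| ≤ (∫ ρ) |v(x)| ≤ |∫ ρ v| + K ‖v'‖_{L²}`. -/

section OneDimensional

variable {a b : ℝ}

theorem integral_derivWithin_Icc_eq_sub {v : ℝ → ℝ} (hab : a < b)
    (hv : ContDiffOn ℝ 1 v (Icc a b)) {x y : ℝ} (hy : y ∈ Icc a b) (hx : x ∈ Icc a b)
    (hyx : y ≤ x) :
    ∫ t in y..x, derivWithin v (Icc a b) t = v x - v y := by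
  have hsub : Icc y x ⊆ Icc a b := Icc_subset_Icc hy.1 hx.2
  refine intervalIntegral.integral_eq_sub_of_hasDerivAt_of_le hyx
    (hv.continuousOn.mono hsub) (fun t ht => ?_) ?_
  · have ht' : t ∈ Ioo a b := ⟨hy.1.trans_lt ht.1, ht.2.trans_le hx.2⟩
    exact ((hv.differentiableOn one_ne_zero t (Ioo_subset_Icc_self ht')).hasDerivWithinAt
      ).hasDerivAt (Icc_mem_nhds ht'.1 ht'.2)
  · refine ContinuousOn.intervalIntegrable ?_
    rw [uIcc_of_le hyx]
    exact (hv.continuousOn_derivWithin (uniqueDiffOn_Icc hab) le_rfl).mono hsub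

theorem abs_sub_le_integral_abs_derivWithin {v : ℝ → ℝ} (hab : a < b)
    (hv : ContDiffOn ℝ 1 v (Icc a b)) {x y : ℝ} (hx : x ∈ Icc a b) (hy : y ∈ Icc a b) :
    |v x - v y| ≤ ∫ t in a..b, |derivWithin v (Icc a b) t| := by
  wlog hyx : y ≤ x generalizing x y
  · rw [abs_sub_comm]
    exact this hy hx (le_of_not_ge hyx)
  have hint : IntervalIntegrable (fun t => |derivWithin v (Icc a b) t|) volume a b := by
    refine ContinuousOn.intervalIntegrable ?_
    rw [uIcc_of_le hab.le]
    exact (hv.continuousOn_derivWithin (uniqueDiffOn_Icc hab) le_rfl).abs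
  rw [← integral_derivWithin_Icc_eq_sub hab hv hy hx hyx]
  calc |∫ t in y..x, derivWithin v (Icc a b) t|
      ≤ ∫ t in y..x, |derivWithin v (Icc a b) t| :=
        intervalIntegral.abs_integral_le_integral_abs hyx
    _ ≤ ∫ t in a..b, |derivWithin v (Icc a b) t| :=
        intervalIntegral.integral_mono_interval hy.1 hyx hx.2
          (Filter.Eventually.of_forall fun _ => abs_nonneg _) hint

theorem integral_sq_abs_sub_const {g : ℝ → ℝ} (hg : IntervalIntegrable g volume a b)
    (hg2 : IntervalIntegrable (fun t => g t ^ 2) volume a b) (c : ℝ) :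
    ∫ t in a..b, (|g t| - c) ^ 2
      = (∫ t in a..b, g t ^ 2) - 2 * c * (∫ t in a..b, |g t|) + c ^ 2 * (b - a) := by
  have hexpand : ∀ t, (|g t| - c) ^ 2 = g t ^ 2 - 2 * c * |g t| + c ^ 2 := fun t => by
    rw [sub_sq, sq_abs]; ring
  simp_rw [hexpand]
  rw [intervalIntegral.integral_add (hg2.sub (hg.abs.const_mul _)) intervalIntegrable_const,
    intervalIntegral.integral_sub hg2 (hg.abs.const_mul _), intervalIntegral.integral_const_mul,
    intervalIntegral.integral_const, smul_eq_mul]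
  ring

theorem sq_integral_abs_le_mul_integral_sq {g : ℝ → ℝ} (hab : a ≤ b)
    (hg : IntervalIntegrable g volume a b)
    (hg2 : IntervalIntegrable (fun t => g t ^ 2) volume a b) :
    (∫ t in a..b, |g t|) ^ 2 ≤ (b - a) * ∫ t in a..b, g t ^ 2 := by
  rcases hab.eq_or_lt with rfl | hab
  · simp
  set A := ∫ t in a..b, |g t|
  have hlen : 0 < b - a := sub_pos.mpr hab
  -- Expand `0 ≤ ∫ (|g| - c)²` at the mean value `c = A / (b - a)`.
  have hvar := integral_sq_abs_sub_const hg hg2 (A / (b - a))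
  have hnonneg : 0 ≤ ∫ t in a..b, (|g t| - A / (b - a)) ^ 2 :=
    intervalIntegral.integral_nonneg hab.le fun _ _ => sq_nonneg _
  have hmean : A / (b - a) * (b - a) = A := div_mul_cancel₀ A hlen.ne'
  nlinarith

theorem integral_abs_le_sqrt_integral_sq {g : ℝ → ℝ}
    (hg : IntervalIntegrable g volume 0 1)
    (hg2 : IntervalIntegrable (fun t => g t ^ 2) volume 0 1) :
    ∫ t in (0:ℝ)..1, |g t| ≤ √(∫ t in (0:ℝ)..1, g t ^ 2) := by
  refine (le_abs_self _).trans (Real.abs_le_sqrt ?_)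
  simpa using sq_integral_abs_le_mul_integral_sq zero_le_one hg hg2

theorem integral_mul_abs_le_of_abs_sub_le {ρ v : ℝ → ℝ} {x C : ℝ} (hab : a ≤ b)
    (hρ_nonneg : ∀ y ∈ Icc a b, 0 ≤ ρ y) (hρ : IntervalIntegrable ρ volume a b)
    (hv : ContinuousOn v (Icc a b)) (hosc : ∀ y ∈ Icc a b, |v x - v y| ≤ C) :
    (∫ y in a..b, ρ y) * |v x|
      ≤ |∫ y in a..b, ρ y * v y| + (∫ y in a..b, ρ y) * C := by
  have hρv : IntervalIntegrable (fun y => ρ y * v y) volume a b :=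
    hρ.mul_continuousOn (by rwa [uIcc_of_le hab])
  have hρd : IntervalIntegrable (fun y => ρ y * (v x - v y)) volume a b :=
    hρ.mul_continuousOn (by rw [uIcc_of_le hab]; exact continuousOn_const.sub hv)
  have hsplit : (∫ y in a..b, ρ y) * v x
      = (∫ y in a..b, ρ y * v y) + ∫ y in a..b, ρ y * (v x - v y) := by
    rw [← intervalIntegral.integral_add hρv hρd, ← intervalIntegral.integral_mul_const]
    congr 1
    funext y
    ring
  have hdev : |∫ y in a..b, ρ y * (v x - v y)| ≤ (∫ y in a..b, ρ y) * C := by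
    rw [← intervalIntegral.integral_mul_const]
    refine (intervalIntegral.abs_integral_le_integral_abs hab).trans
      (intervalIntegral.integral_mono_on hab hρd.abs (hρ.mul_const C) fun y hy => ?_)
    rw [abs_mul, abs_of_nonneg (hρ_nonneg y hy)]
    exact mul_le_mul_of_nonneg_left (hosc y hy) (hρ_nonneg y hy)
  have hmass : 0 ≤ ∫ y in a..b, ρ y := intervalIntegral.integral_nonneg hab hρ_nonneg
  calc (∫ y in a..b, ρ y) * |v x| = |(∫ y in a..b, ρ y) * v x| := by
        rw [abs_mul, abs_of_nonneg hmass]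
    _ ≤ _ := by rw [hsplit]; exact (abs_add_le _ _).trans (by gcongr)

end OneDimensional

theorem stmt0_general (ρ v : ℝ → ℝ) (M K : ℝ) (hM : 0 < M)
    (hρ_nonneg : ∀ x ∈ Set.Icc (0:ℝ) 1, 0 ≤ ρ x)
    (hρ_int : IntervalIntegrable ρ MeasureTheory.volume 0 1)
    (hmass_low : M ≤ ∫ x in (0:ℝ)..1, ρ x)
    (hmass_up : (∫ x in (0:ℝ)..1, ρ x) ≤ K)
    (hv : ContDiffOn ℝ 1 v (Set.Icc 0 1)) :
    ∀ x ∈ Set.Icc (0:ℝ) 1,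
      |v x| ≤ (K / M) * Real.sqrt (∫ y in (0:ℝ)..1, (derivWithin v (Set.Icc 0 1) y) ^ 2)
        + (1 / M) * |∫ y in (0:ℝ)..1, ρ y * v y| := by
  intro x hx
  set C := √(∫ y in (0:ℝ)..1, (derivWithin v (Icc 0 1) y) ^ 2)
  have hv' : ContinuousOn (derivWithin v (Icc 0 1)) (uIcc 0 1) := by
    rw [uIcc_of_le zero_le_one]
    exact hv.continuousOn_derivWithin (uniqueDiffOn_Icc zero_lt_one) le_rfl
  have hosc : ∀ y ∈ Icc (0:ℝ) 1, |v x - v y| ≤ C := fun y hy =>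
    (abs_sub_le_integral_abs_derivWithin zero_lt_one hv hx hy).trans
      (integral_abs_le_sqrt_integral_sq hv'.intervalIntegrable (hv'.pow 2).intervalIntegrable)
  have hweighted := integral_mul_abs_le_of_abs_sub_le zero_le_one hρ_nonneg hρ_int
    hv.continuousOn hosc
  have hbound : M * |v x| ≤ |∫ y in (0:ℝ)..1, ρ y * v y| + K * C := calc
    M * |v x| ≤ (∫ y in (0:ℝ)..1, ρ y) * |v x| := by gcongr
    _ ≤ _ := hweighted.trans (by gcongr)
  rw [div_mul_eq_mul_div, one_div_mul_eq_div, ← add_div, le_div_iff₀ hM]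
  linarith

/-- Lemma 1.4 (i): if `ρ ≥ 0` is integrable on `[0,1]` with
`0 < M ≤ ∫₀¹ ρ ≤ K`, then every `v ∈ C¹([0,1])` satisfies
`sup_{[0,1]} |v| ≤ (K/M) ‖v'‖_{L²(0,1)} + (1/M) |∫₀¹ ρ v|`. -/
theorem stmt0 (ρ v : ℝ → ℝ) (M K : ℝ) (hM : 0 < M) (hMK : M ≤ K)
    (hρ_nonneg : ∀ x ∈ Set.Icc (0:ℝ) 1, 0 ≤ ρ x)
    (hρ_int : IntervalIntegrable ρ MeasureTheory.volume 0 1)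
    (hmass_low : M ≤ ∫ x in (0:ℝ)..1, ρ x)
    (hmass_up : (∫ x in (0:ℝ)..1, ρ x) ≤ K)
    (hv : ContDiffOn ℝ 1 v (Set.Icc 0 1)) :
    ∀ x ∈ Set.Icc (0:ℝ) 1,
      |v x| ≤ (K / M) * Real.sqrt (∫ y in (0:ℝ)..1, (derivWithin v (Set.Icc 0 1) y) ^ 2)
        + (1 / M) * |∫ y in (0:ℝ)..1, ρ y * v y| :=
  stmt0_general ρ v M K hM hρ_nonneg hρ_int hmass_low hmass_up hv
end

section
/- There exists a constant C depending only on T, q, C₀ and on upper bounds for ∫₀¹ (ρ₀(θ₀ + (u₀² + |w₀|²)/2) + |b₀|²/2) dx, ∫₀¹ ρ₀ dx, and ∫₀¹ ρ₀ (|ln ρ₀| + |ln θ₀|) dx, such that every smooth solution (ρ,u,w,b,θ) of the planar compressible MHD system on Q_T satisfies, for all t ∈ [0,T]: ∫₀¹ (ρ ln ρ + ρ |ln θ|)(x,t) dx + ∬_{Q_T} [ (u_x² + |w_x|² + |b_x|²)/θ + κ(θ) θ_x²/θ² ] dx dt ≤ C. -/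
open Real MeasureTheory Set

noncomputable section

/-- Partial derivative in the first (spatial) variable of `f : ℝ → ℝ → ℝ`, `f x t`. -/
def pdx (f : ℝ → ℝ → ℝ) : ℝ → ℝ → ℝ := fun x t => deriv (fun y => f y t) x

/-- Partial derivative in the second (time) variable. -/
def pdt (f : ℝ → ℝ → ℝ) : ℝ → ℝ → ℝ := fun x t => deriv (fun s => f x s) t

/-- The `L²(0,1)` norm of a function. -/
def L2norm (f : ℝ → ℝ) : ℝ := Real.sqrt (∫ x in (0:ℝ)..1, (f x) ^ 2)

/-- The `H²(0,1)` norm of a (smooth) function. -/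
def H2norm (f : ℝ → ℝ) : ℝ :=
  Real.sqrt (∫ x in (0:ℝ)..1, (f x) ^ 2 + (deriv f x) ^ 2 + (deriv (deriv f) x) ^ 2)

/-- A smooth solution of the planar compressible MHD system (all physical constants
normalized to `1`, perfect-gas pressure `P = ρθ`, heat conductivity `κ`) on
`Q_T = [0,1] × [0,T]`:  `ρ, u, θ` are scalar fields, `w, b` are `ℝ²`-valued fields
(given by their two components), everything is smooth, `ρ > 0` and `θ > 0` on `Q_T`,
the five PDEs hold on `Q_T`, and the boundary conditions
`u = 0`, `w = 0`, `b = 0`, `θ_x = 0` hold at `x = 0` and `x = 1`. -/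
structure MHDSol (T : ℝ) (κ : ℝ → ℝ) where
  ρ : ℝ → ℝ → ℝ
  u : ℝ → ℝ → ℝ
  θ : ℝ → ℝ → ℝ
  w : Fin 2 → ℝ → ℝ → ℝ
  b : Fin 2 → ℝ → ℝ → ℝ
  smooth_ρ : ContDiff ℝ (⊤ : ℕ∞) (Function.uncurry ρ)
  smooth_u : ContDiff ℝ (⊤ : ℕ∞) (Function.uncurry u)
  smooth_θ : ContDiff ℝ (⊤ : ℕ∞) (Function.uncurry θ)
  smooth_w : ∀ i, ContDiff ℝ (⊤ : ℕ∞) (Function.uncurry (w i))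
  smooth_b : ∀ i, ContDiff ℝ (⊤ : ℕ∞) (Function.uncurry (b i))
  ρ_pos : ∀ x ∈ Set.Icc (0:ℝ) 1, ∀ t ∈ Set.Icc (0:ℝ) T, 0 < ρ x t
  θ_pos : ∀ x ∈ Set.Icc (0:ℝ) 1, ∀ t ∈ Set.Icc (0:ℝ) T, 0 < θ x t
  eq_mass : ∀ x ∈ Set.Icc (0:ℝ) 1, ∀ t ∈ Set.Icc (0:ℝ) T,
    pdt ρ x t + pdx (fun x t => ρ x t * u x t) x t = 0
  eq_mom : ∀ x ∈ Set.Icc (0:ℝ) 1, ∀ t ∈ Set.Icc (0:ℝ) T,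
    pdt (fun x t => ρ x t * u x t) x t
      + pdx (fun x t =>
          ρ x t * (u x t) ^ 2 + ρ x t * θ x t + (∑ i, (b i x t) ^ 2) / 2) x t
      = pdx (pdx u) x t
  eq_w : ∀ i, ∀ x ∈ Set.Icc (0:ℝ) 1, ∀ t ∈ Set.Icc (0:ℝ) T,
    pdt (fun x t => ρ x t * w i x t) x t
      + pdx (fun x t => ρ x t * u x t * w i x t - b i x t) x t
      = pdx (pdx (w i)) x t
  eq_b : ∀ i, ∀ x ∈ Set.Icc (0:ℝ) 1, ∀ t ∈ Set.Icc (0:ℝ) T,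
    pdt (b i) x t + pdx (fun x t => u x t * b i x t - w i x t) x t
      = pdx (pdx (b i)) x t
  eq_θ : ∀ x ∈ Set.Icc (0:ℝ) 1, ∀ t ∈ Set.Icc (0:ℝ) T,
    pdt (fun x t => ρ x t * θ x t) x t
      + pdx (fun x t => ρ x t * u x t * θ x t) x t
      - pdx (fun x t => κ (θ x t) * pdx θ x t) x t
      = (pdx u x t) ^ 2 + (∑ i, (pdx (w i) x t) ^ 2) + (∑ i, (pdx (b i) x t) ^ 2)
        - ρ x t * θ x t * pdx u x t
  bc_u : ∀ t ∈ Set.Icc (0:ℝ) T, u 0 t = 0 ∧ u 1 t = 0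
  bc_w : ∀ i, ∀ t ∈ Set.Icc (0:ℝ) T, w i 0 t = 0 ∧ w i 1 t = 0
  bc_b : ∀ i, ∀ t ∈ Set.Icc (0:ℝ) T, b i 0 t = 0 ∧ b i 1 t = 0
  bc_θ : ∀ t ∈ Set.Icc (0:ℝ) T, pdx θ 0 t = 0 ∧ pdx θ 1 t = 0

/-- The heat conductivity `κ` is `C²` on `[0,∞)` and satisfies
`C₀⁻¹ (1 + s^q) ≤ κ(s) ≤ C₀ (1 + s^q)` there. -/
def KappaHyp (q C₀ : ℝ) (κ : ℝ → ℝ) : Prop :=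
  ContDiffOn ℝ 2 κ (Set.Ici 0) ∧
  (∀ s : ℝ, 0 ≤ s → C₀⁻¹ * (1 + s ^ q) ≤ κ s) ∧
  (∀ s : ℝ, 0 ≤ s → κ s ≤ C₀ * (1 + s ^ q))

/-- Bounds on the initial data: `A` is an upper bound for the `H²(0,1)` norms of
`ρ₀, u₀, w₀, b₀, θ₀`, `B` is an upper bound for `∫₀¹ ρ₀ (|ln ρ₀| + |ln θ₀|) dx`, and
`M` is a (positive) lower bound for the total mass `∫₀¹ ρ₀ dx`. -/
def InitBounds {T : ℝ} {κ : ℝ → ℝ} (sol : MHDSol T κ) (A B M : ℝ) : Prop :=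
  H2norm (fun x => sol.ρ x 0) ≤ A ∧ H2norm (fun x => sol.u x 0) ≤ A ∧
  H2norm (fun x => sol.θ x 0) ≤ A ∧
  (∀ i, H2norm (fun x => sol.w i x 0) ≤ A) ∧
  (∀ i, H2norm (fun x => sol.b i x 0) ≤ A) ∧
  (∫ x in (0:ℝ)..1, sol.ρ x 0 * (|Real.log (sol.ρ x 0)| + |Real.log (sol.θ x 0)|)) ≤ B ∧
  M ≤ ∫ x in (0:ℝ)..1, sol.ρ x 0

/-- `G` is an upper bound for the `L²(0,1)` norms of the compatibility functions
`g₁ = (∂ₓ²u₀ − ∂ₓ(ρ₀θ₀ + |b₀|²/2))/√ρ₀`, `g₂ = (∂ₓ²w₀ − ∂ₓb₀)/√ρ₀`,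
`g₃ = (∂ₓ(κ(θ₀)∂ₓθ₀) + (∂ₓu₀)² + |∂ₓw₀|² + |∂ₓb₀|²)/√ρ₀`. -/
def CompatBounds {T : ℝ} {κ : ℝ → ℝ} (sol : MHDSol T κ) (G : ℝ) : Prop :=
  L2norm (fun x =>
      (pdx (pdx sol.u) x 0
        - pdx (fun x t => sol.ρ x t * sol.θ x t + (∑ i, (sol.b i x t) ^ 2) / 2) x 0)
      / Real.sqrt (sol.ρ x 0)) ≤ G ∧
  (∀ i, L2norm (fun x =>
      (pdx (pdx (sol.w i)) x 0 - pdx (sol.b i) x 0) / Real.sqrt (sol.ρ x 0)) ≤ G) ∧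
  L2norm (fun x =>
      (pdx (fun x t => κ (sol.θ x t) * pdx sol.θ x t) x 0
        + (pdx sol.u x 0) ^ 2 + (∑ i, (pdx (sol.w i) x 0) ^ 2)
        + (∑ i, (pdx (sol.b i) x 0) ^ 2))
      / Real.sqrt (sol.ρ x 0)) ≤ G

abbrev Sm (f : ℝ → ℝ → ℝ) : Prop := ContDiff ℝ (⊤ : ℕ∞) (Function.uncurry f)

lemma Sm.sliceX {f : ℝ → ℝ → ℝ} (hf : Sm f) (t : ℝ) : ContDiff ℝ (⊤ : ℕ∞) (fun y => f y t) :=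
  hf.comp (contDiff_id.prodMk contDiff_const)

lemma Sm.sliceT {f : ℝ → ℝ → ℝ} (hf : Sm f) (x : ℝ) : ContDiff ℝ (⊤ : ℕ∞) (fun s => f x s) :=
  hf.comp (contDiff_const.prodMk contDiff_id)

lemma Sm.hdX {f : ℝ → ℝ → ℝ} (hf : Sm f) (x t : ℝ) :
    HasDerivAt (fun y => f y t) (pdx f x t) x :=
  ((hf.sliceX t).differentiable (by simp) x).hasDerivAt

lemma Sm.hdT {f : ℝ → ℝ → ℝ} (hf : Sm f) (x t : ℝ) :
    HasDerivAt (fun s => f x s) (pdt f x t) t :=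
  ((hf.sliceT x).differentiable (by simp) t).hasDerivAt

lemma Sm.pdx_eq_fderiv {f : ℝ → ℝ → ℝ} (hf : Sm f) (x t : ℝ) :
    pdx f x t = fderiv ℝ (Function.uncurry f) (x, t) (1, 0) := by
  show deriv (fun y => f y t) x = _
  have h1 : HasDerivAt (fun y : ℝ => (y, t)) ((1:ℝ), (0:ℝ)) x :=
    (hasDerivAt_id x).prodMk (hasDerivAt_const x t)
  have h2 : HasFDerivAt (Function.uncurry f) (fderiv ℝ (Function.uncurry f) (x, t)) (x, t) :=
    (hf.differentiable (by simp) (x, t)).hasFDerivAt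
  have h3 : HasDerivAt (fun y => f y t) ((fderiv ℝ (Function.uncurry f) (x, t)) (1, 0)) x :=
    by have := h2.comp_hasDerivAt x h1; exact this
  exact h3.deriv

lemma Sm.pdt_eq_fderiv {f : ℝ → ℝ → ℝ} (hf : Sm f) (x t : ℝ) :
    pdt f x t = fderiv ℝ (Function.uncurry f) (x, t) (0, 1) := by
  show deriv (fun s => f x s) t = _
  have h1 : HasDerivAt (fun s : ℝ => (x, s)) ((0:ℝ), (1:ℝ)) t :=
    (hasDerivAt_const t x).prodMk (hasDerivAt_id t)
  have h2 : HasFDerivAt (Function.uncurry f) (fderiv ℝ (Function.uncurry f) (x, t)) (x, t) :=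
    (hf.differentiable (by simp) (x, t)).hasFDerivAt
  have h3 : HasDerivAt (fun s => f x s) ((fderiv ℝ (Function.uncurry f) (x, t)) (0, 1)) t :=
    h2.comp_hasDerivAt t h1
  exact h3.deriv

lemma Sm.pdX {f : ℝ → ℝ → ℝ} (hf : Sm f) : Sm (pdx f) := by
  show ContDiff ℝ (⊤ : ℕ∞) (Function.uncurry (pdx f))
  have : Function.uncurry (pdx f) = fun p : ℝ × ℝ => fderiv ℝ (Function.uncurry f) p (1, 0) := by
    funext p
    exact hf.pdx_eq_fderiv p.1 p.2
  rw [this]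
  exact (hf.fderiv_right (by simp)).clm_apply contDiff_const

lemma Sm.pdT {f : ℝ → ℝ → ℝ} (hf : Sm f) : Sm (pdt f) := by
  show ContDiff ℝ (⊤ : ℕ∞) (Function.uncurry (pdt f))
  have : Function.uncurry (pdt f) = fun p : ℝ × ℝ => fderiv ℝ (Function.uncurry f) p (0, 1) := by
    funext p
    exact hf.pdt_eq_fderiv p.1 p.2
  rw [this]
  exact (hf.fderiv_right (by simp)).clm_apply contDiff_const

lemma Sm.cont {f : ℝ → ℝ → ℝ} (hf : Sm f) : Continuous (Function.uncurry f) :=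
  hf.continuous

lemma key {T ε : ℝ} (hT : 0 < T) (hε : 0 < ε)
    (I It S Φ : ℝ → ℝ → ℝ)
    (hIc : ContinuousOn (Function.uncurry I) (Icc 0 1 ×ˢ Ioo (-ε) (T+ε)))
    (hItc : ContinuousOn (Function.uncurry It) (Icc 0 1 ×ˢ Ioo (-ε) (T+ε)))
    (hSc : ContinuousOn (Function.uncurry S) (Icc 0 1 ×ˢ Ioo (-ε) (T+ε)))
    (hdiff : ∀ x ∈ Icc (0:ℝ) 1, ∀ s ∈ Ioo (-ε) (T+ε), HasDerivAt (fun s' => I x s') (It x s) s)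
    (hflux : ∀ s ∈ Icc (0:ℝ) T, ∀ x ∈ Icc (0:ℝ) 1,
      HasDerivAt (fun y => Φ y s) (It x s - S x s) x)
    (hbc : ∀ s ∈ Icc (0:ℝ) T, Φ 1 s = Φ 0 s) :
    ∀ t ∈ Icc (0:ℝ) T,
      (∫ x in (0:ℝ)..1, I x t) - (∫ x in (0:ℝ)..1, I x 0)
        = ∫ s in (0:ℝ)..t, ∫ x in (0:ℝ)..1, S x s := by
  have h01 : (0:ℝ) ≤ 1 := by norm_num
  have huIcc : uIcc (0:ℝ) 1 = Icc 0 1 := uIcc_of_le h01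
  have huIoc : uIoc (0:ℝ) 1 = Ioc 0 1 := uIoc_of_le h01
  have hTsub : Icc (0:ℝ) T ⊆ Ioo (-ε) (T+ε) := fun s hs => ⟨by linarith [hs.1], by linarith [hs.2]⟩
  -- slice continuity
  have sliceX : ∀ (F : ℝ → ℝ → ℝ), ContinuousOn (Function.uncurry F) (Icc 0 1 ×ˢ Ioo (-ε) (T+ε)) →
      ∀ s ∈ Ioo (-ε) (T+ε), ContinuousOn (fun x => F x s) (Icc 0 1) := by
    intro F hF s hs
    have : ContinuousOn (fun x : ℝ => (x, s)) (Icc 0 1) := (continuous_id.prodMk continuous_const).continuousOn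
    exact hF.comp this (fun x hx => ⟨hx, hs⟩)
  have sliceT : ∀ (F : ℝ → ℝ → ℝ), ContinuousOn (Function.uncurry F) (Icc 0 1 ×ˢ Ioo (-ε) (T+ε)) →
      ∀ x ∈ Icc (0:ℝ) 1, ContinuousOn (fun s => F x s) (Ioo (-ε) (T+ε)) := by
    intro F hF x hx
    have : ContinuousOn (fun s : ℝ => (x, s)) (Ioo (-ε) (T+ε)) := (continuous_const.prodMk continuous_id).continuousOn
    exact hF.comp this (fun s hs => ⟨hx, hs⟩)
  have intIt : ∀ s ∈ Icc (0:ℝ) T, IntervalIntegrable (fun x => It x s) volume 0 1 := by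
    intro s hs
    apply ContinuousOn.intervalIntegrable
    rw [huIcc]; exact sliceX It hItc s (hTsub hs)
  have intS : ∀ s ∈ Icc (0:ℝ) T, IntervalIntegrable (fun x => S x s) volume 0 1 := by
    intro s hs
    apply ContinuousOn.intervalIntegrable
    rw [huIcc]; exact sliceX S hSc s (hTsub hs)
  -- Step B : ∫ It = ∫ S at each time
  have stepB : ∀ s ∈ Icc (0:ℝ) T,
      (∫ x in (0:ℝ)..1, It x s) = ∫ x in (0:ℝ)..1, S x s := by
    intro s hs
    have hftc : ∫ x in (0:ℝ)..1, (It x s - S x s) = Φ 1 s - Φ 0 s := by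
      apply intervalIntegral.integral_eq_sub_of_hasDerivAt (f := fun y => Φ y s)
      · intro x hx
        rw [huIcc] at hx
        exact hflux s hs x hx
      · exact (intIt s hs).sub (intS s hs)
    have := intervalIntegral.integral_sub (intIt s hs) (intS s hs)
    rw [hftc, hbc s hs, sub_self] at this
    linarith [this]
  -- Step A : Leibniz
  have stepA : ∀ s₀ ∈ Icc (0:ℝ) T,
      HasDerivAt (fun s => ∫ x in (0:ℝ)..1, I x s) (∫ x in (0:ℝ)..1, It x s₀) s₀ := by
    intro s₀ hs₀
    have hε2 : 0 < ε/2 := by linarith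
    have hballsub : Metric.ball s₀ (ε/2) ⊆ Ioo (-ε) (T+ε) := by
      intro s hs
      rw [Metric.mem_ball, Real.dist_eq] at hs
      have := abs_lt.mp hs
      constructor <;> [linarith [hs₀.1]; linarith [hs₀.2]]
    have hIccsub : Icc (s₀ - ε/2) (s₀ + ε/2) ⊆ Ioo (-ε) (T+ε) := by
      intro s hs
      constructor <;> [linarith [hs.1, hs₀.1]; linarith [hs.2, hs₀.2]]
    -- bound on compact
    obtain ⟨C, hC⟩ := (isCompact_Icc.prod isCompact_Icc).exists_bound_of_continuousOn
      (hItc.mono (Set.prod_mono subset_rfl hIccsub))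
    have main := intervalIntegral.hasDerivAt_integral_of_dominated_loc_of_deriv_le
      (F := fun s x => I x s) (F' := fun s x => It x s) (bound := fun _ => C)
      (μ := volume) (a := (0:ℝ)) (b := 1) (x₀ := s₀) (Metric.ball_mem_nhds s₀ hε2)
      ?_ ?_ ?_ ?_ ?_ ?_
    · exact main.2
    · -- hF_meas
      filter_upwards [eventually_nhds_iff.mpr ⟨Metric.ball s₀ (ε/2), fun s hs => hs,
        Metric.isOpen_ball, Metric.mem_ball_self hε2⟩] with s hs
      have hcs : ContinuousOn (fun x => I x s) (Icc 0 1) := sliceX I hIc s (hballsub hs)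
      have : AEStronglyMeasurable (fun x => I x s) (volume.restrict (Icc 0 1)) :=
        hcs.aestronglyMeasurable measurableSet_Icc
      rw [huIoc]
      exact this.mono_measure (Measure.restrict_mono Ioc_subset_Icc_self le_rfl)
    · -- hF_int
      apply ContinuousOn.intervalIntegrable
      rw [huIcc]; exact sliceX I hIc s₀ (hTsub hs₀)
    · -- hF'_meas
      have hcs : ContinuousOn (fun x => It x s₀) (Icc 0 1) := sliceX It hItc s₀ (hTsub hs₀)
      have h2 : AEStronglyMeasurable (fun x => It x s₀) (volume.restrict (Icc 0 1)) :=
        hcs.aestronglyMeasurable measurableSet_Icc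
      rw [huIoc]
      exact h2.mono_measure (Measure.restrict_mono Ioc_subset_Icc_self le_rfl)
    · -- h_bound
      apply ae_of_all
      intro x hx s hs
      rw [huIoc] at hx
      rw [Metric.mem_ball, Real.dist_eq] at hs
      have hs' := abs_lt.mp hs
      exact hC (x, s) ⟨Ioc_subset_Icc_self hx, ⟨by linarith, by linarith⟩⟩
    · exact intervalIntegrable_const
    · -- h_diff
      apply ae_of_all
      intro x hx s hs
      rw [huIoc] at hx
      exact hdiff x (Ioc_subset_Icc_self hx) s (hballsub hs)
  -- Step C : continuity of s ↦ ∫ S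
  obtain ⟨C₂, hC₂⟩ := (isCompact_Icc.prod isCompact_Icc).exists_bound_of_continuousOn
    (hSc.mono (Set.prod_mono subset_rfl hTsub))
  have stepC : ContinuousOn (fun s => ∫ x in (0:ℝ)..1, S x s) (Icc 0 T) := by
    intro s₀ hs₀
    apply intervalIntegral.continuousWithinAt_of_dominated_interval
      (F := fun s x => S x s) (bound := fun _ => C₂)
    · apply Filter.Eventually.mono (eventually_mem_nhdsWithin (s := Icc 0 T) (a := s₀))
      intro s hs
      have hcs : ContinuousOn (fun x => S x s) (Icc 0 1) := sliceX S hSc s (hTsub hs)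
      have h2 : AEStronglyMeasurable (fun x => S x s) (volume.restrict (Icc 0 1)) :=
        hcs.aestronglyMeasurable measurableSet_Icc
      rw [huIoc]
      exact h2.mono_measure (Measure.restrict_mono Ioc_subset_Icc_self le_rfl)
    · apply Filter.Eventually.mono (eventually_mem_nhdsWithin (s := Icc 0 T) (a := s₀))
      intro s hs
      apply ae_of_all
      intro x hx
      rw [huIoc] at hx
      exact hC₂ (x, s) ⟨Ioc_subset_Icc_self hx, hs⟩
    · exact intervalIntegrable_const
    · apply ae_of_all
      intro x hx
      rw [huIoc] at hx
      have := sliceT S hSc x (Ioc_subset_Icc_self hx)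
      exact ((this.mono hTsub) s₀ hs₀)
  -- Step D : FTC in time
  intro t ht
  have huIcct : uIcc (0:ℝ) t = Icc 0 t := uIcc_of_le ht.1
  have hsubt : Icc (0:ℝ) t ⊆ Icc 0 T := Icc_subset_Icc le_rfl ht.2
  have hftc := intervalIntegral.integral_eq_sub_of_hasDerivAt
    (f := fun s => ∫ x in (0:ℝ)..1, I x s) (f' := fun s => ∫ x in (0:ℝ)..1, S x s)
    (a := 0) (b := t) ?_ ?_
  · linarith [hftc]
  · intro s hs
    rw [huIcct] at hs
    have := stepA s (hsubt hs)
    rwa [stepB s (hsubt hs)] at this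
  · apply ContinuousOn.intervalIntegrable
    rw [huIcct]
    exact stepC.mono hsubt

lemma extend_pos {T : ℝ} (hT : 0 < T) (f g : ℝ → ℝ → ℝ)
    (hf : Continuous (Function.uncurry f)) (hg : Continuous (Function.uncurry g))
    (hpos : ∀ x ∈ Icc (0:ℝ) 1, ∀ t ∈ Icc (0:ℝ) T, 0 < f x t ∧ 0 < g x t) :
    ∃ ε > 0, ∀ x ∈ Icc (0:ℝ) 1, ∀ s ∈ Ioo (-ε) (T+ε), 0 < f x s ∧ 0 < g x s := by
  set V : Set (ℝ × ℝ) := {p | 0 < f p.1 p.2 ∧ 0 < g p.1 p.2} with hV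
  have hVopen : IsOpen V := by
    have h1 : V = (Function.uncurry f) ⁻¹' (Ioi 0) ∩ (Function.uncurry g) ⁻¹' (Ioi 0) := rfl
    rw [h1]
    exact (isOpen_Ioi.preimage hf).inter (isOpen_Ioi.preimage hg)
  have hK : IsCompact (Icc (0:ℝ) 1 ×ˢ Icc (0:ℝ) T) := isCompact_Icc.prod isCompact_Icc
  have hKV : Icc (0:ℝ) 1 ×ˢ Icc (0:ℝ) T ⊆ V := fun p hp => hpos p.1 hp.1 p.2 hp.2
  obtain ⟨δ, hδ, hsub⟩ := hK.exists_thickening_subset_open hVopen hKV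
  refine ⟨δ/2, by linarith, ?_⟩
  intro x hx s hs
  have hmem : (x, s) ∈ Metric.thickening δ (Icc (0:ℝ) 1 ×ˢ Icc (0:ℝ) T) := by
    rw [Metric.mem_thickening_iff]
    refine ⟨(x, max 0 (min s T)), ⟨hx, ?_, ?_⟩, ?_⟩
    · exact le_max_left _ _
    · exact max_le (le_of_lt hT) (min_le_right _ _)
    · rw [Prod.dist_eq]
      simp only [dist_self]
      have : dist s (max 0 (min s T)) < δ := by
        rw [Real.dist_eq, abs_lt]
        rcases le_or_gt s 0 with h | h
        · rw [min_eq_left (by linarith), max_eq_left (by linarith)]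
          constructor <;> [linarith [hs.1]; linarith]
        rcases le_or_gt s T with h2 | h2
        · rw [min_eq_left h2, max_eq_right (le_of_lt h)]
          constructor <;> linarith
        · rw [min_eq_right (le_of_lt h2), max_eq_right (le_of_lt hT)]
          constructor <;> [linarith; linarith [hs.2]]
      exact max_lt hδ this
  exact hsub hmem

lemma HasDerivAt.sq {f : ℝ → ℝ} {f' x : ℝ} (h : HasDerivAt f f' x) :
    HasDerivAt (fun y => f y ^ 2) (2 * f x * f') x := by
  simpa [mul_comm, mul_assoc] using h.fun_pow 2

lemma energy_eq {T : ℝ} {κ : ℝ → ℝ} (hT : 0 < T) (sol : MHDSol T κ)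
    (hκd : ∀ s : ℝ, 0 < s → DifferentiableAt ℝ κ s) :
    ∀ t ∈ Icc (0:ℝ) T,
      (∫ x in (0:ℝ)..1, sol.ρ x t * sol.θ x t
          + sol.ρ x t * ((sol.u x t)^2 + (sol.w 0 x t)^2 + (sol.w 1 x t)^2)/2
          + ((sol.b 0 x t)^2 + (sol.b 1 x t)^2)/2)
      = ∫ x in (0:ℝ)..1, sol.ρ x 0 * sol.θ x 0
          + sol.ρ x 0 * ((sol.u x 0)^2 + (sol.w 0 x 0)^2 + (sol.w 1 x 0)^2)/2
          + ((sol.b 0 x 0)^2 + (sol.b 1 x 0)^2)/2 := by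
  obtain ⟨r, u, h, w, b, smr, smu, smh, smw, smb, posr, posh,
    emass, emom, ew, eb, eth, bcu, bcw, bcb, bch⟩ := sol
  simp only
  have smρ : Sm r := smr
  have smuu : Sm u := smu
  have smhh : Sm h := smh
  have smw0 : Sm (w 0) := smw 0
  have smw1 : Sm (w 1) := smw 1
  have smb0 : Sm (b 0) := smb 0
  have smb1 : Sm (b 1) := smb 1
  have h0T : (0:ℝ) ∈ Icc (0:ℝ) T := ⟨le_refl 0, le_of_lt hT⟩
  have main := key (ε := 1) hT one_pos
    (fun x t => r x t * h x t + r x t * ((u x t)^2 + (w 0 x t)^2 + (w 1 x t)^2)/2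
       + ((b 0 x t)^2 + (b 1 x t)^2)/2)
    (fun x s => (pdt r x s * h x s + r x s * pdt h x s)
       + (pdt r x s * ((u x s)^2 + (w 0 x s)^2 + (w 1 x s)^2)
          + r x s * ((2 * u x s * pdt u x s + 2 * w 0 x s * pdt (w 0) x s)
             + 2 * w 1 x s * pdt (w 1) x s)) / 2
       + (2 * b 0 x s * pdt (b 0) x s + 2 * b 1 x s * pdt (b 1) x s) / 2)
    (fun _ _ => (0:ℝ))
    (fun y s => u y s * pdx u y s + w 0 y s * pdx (w 0) y s + w 1 y s * pdx (w 1) y s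
       + b 0 y s * pdx (b 0) y s + b 1 y s * pdx (b 1) y s
       + κ (h y s) * pdx h y s
       - u y s * (2 * r y s * h y s + r y s * ((u y s)^2 + (w 0 y s)^2 + (w 1 y s)^2)/2
           + ((b 0 y s)^2 + (b 1 y s)^2))
       + (w 0 y s * b 0 y s + w 1 y s * b 1 y s))
    ?_ ?_ ?_ ?_ ?_ ?_
  · intro t ht
    have := main t ht
    simp only [intervalIntegral.integral_const, smul_zero, intervalIntegral.integral_zero] at this
    linarith [this]
  · -- hIc
    apply Continuous.continuousOn
    show Continuous fun p : ℝ × ℝ => r p.1 p.2 * h p.1 p.2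
      + r p.1 p.2 * ((u p.1 p.2)^2 + (w 0 p.1 p.2)^2 + (w 1 p.1 p.2)^2)/2
      + ((b 0 p.1 p.2)^2 + (b 1 p.1 p.2)^2)/2
    have cr := smρ.cont; have cu := smuu.cont; have ch := smhh.cont
    have cw0 := smw0.cont; have cw1 := smw1.cont; have cb0 := smb0.cont; have cb1 := smb1.cont
    exact ((cr.mul ch).add (((cr.mul (((cu.pow 2).add (cw0.pow 2)).add (cw1.pow 2))).div_const 2))).add
      ((((cb0.pow 2).add (cb1.pow 2))).div_const 2)
  · -- hItc
    apply Continuous.continuousOn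
    show Continuous fun p : ℝ × ℝ => (pdt r p.1 p.2 * h p.1 p.2 + r p.1 p.2 * pdt h p.1 p.2)
       + (pdt r p.1 p.2 * ((u p.1 p.2)^2 + (w 0 p.1 p.2)^2 + (w 1 p.1 p.2)^2)
          + r p.1 p.2 * ((2 * u p.1 p.2 * pdt u p.1 p.2 + 2 * w 0 p.1 p.2 * pdt (w 0) p.1 p.2)
             + 2 * w 1 p.1 p.2 * pdt (w 1) p.1 p.2)) / 2
       + (2 * b 0 p.1 p.2 * pdt (b 0) p.1 p.2 + 2 * b 1 p.1 p.2 * pdt (b 1) p.1 p.2) / 2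
    have cr := smρ.cont; have cu := smuu.cont; have ch := smhh.cont
    have cw0 := smw0.cont; have cw1 := smw1.cont; have cb0 := smb0.cont; have cb1 := smb1.cont
    have crt := smρ.pdT.cont; have cut := smuu.pdT.cont; have cht := smhh.pdT.cont
    have cw0t := smw0.pdT.cont; have cw1t := smw1.pdT.cont
    have cb0t := smb0.pdT.cont; have cb1t := smb1.pdT.cont
    exact (((crt.mul ch).add (cr.mul cht)).add
      (((crt.mul (((cu.pow 2).add (cw0.pow 2)).add (cw1.pow 2))).add
        (cr.mul ((((continuous_const.mul cu).mul cut).add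
          ((continuous_const.mul cw0).mul cw0t)).add
          ((continuous_const.mul cw1).mul cw1t)))).div_const 2)).add
      ((((continuous_const.mul cb0).mul cb0t).add
        ((continuous_const.mul cb1).mul cb1t)).div_const 2)
  · exact continuousOn_const
  · -- hdiff
    intro x hx s hs
    exact ((smρ.hdT x s).mul (smhh.hdT x s)).add
      ((((smρ.hdT x s).mul ((((smuu.hdT x s).sq.add (smw0.hdT x s).sq)).add (smw1.hdT x s).sq)).div_const 2))
      |>.add ((((smb0.hdT x s).sq.add (smb1.hdT x s).sq)).div_const 2)
  · -- hflux
    intro s hs x hx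
    have Hr := smρ.hdX x s
    have Hu := smuu.hdX x s
    have Hh := smhh.hdX x s
    have Hw0 := smw0.hdX x s
    have Hw1 := smw1.hdX x s
    have Hb0 := smb0.hdX x s
    have Hb1 := smb1.hdX x s
    have Huxx := smuu.pdX.hdX x s
    have Hw0xx := smw0.pdX.hdX x s
    have Hw1xx := smw1.pdX.hdX x s
    have Hb0xx := smb0.pdX.hdX x s
    have Hb1xx := smb1.pdX.hdX x s
    have hκθ : HasDerivAt (fun y => κ (h y s) * pdx h y s)
        (pdx (fun x t => κ (h x t) * pdx h x t) x s) x := by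
      apply DifferentiableAt.hasDerivAt
      apply DifferentiableAt.mul
      · exact (hκd (h x s) (posh x hx s hs)).comp x ((smhh.sliceX s).differentiable (by simp) x)
      · exact ((smhh.pdX.sliceX s).differentiable (by simp) x)
    have e1 := emass x hx s hs
    have e2 := emom x hx s hs
    have e3 := ew 0 x hx s hs
    have e4 := ew 1 x hx s hs
    have e5 := eb 0 x hx s hs
    have e6 := eb 1 x hx s hs
    have e7 := eth x hx s hs
    simp only [Fin.sum_univ_two] at e2 e7
    have E1 : pdx (fun x t => r x t * u x t) x s
        = pdx r x s * u x s + r x s * pdx u x s := (Hr.mul Hu).deriv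
    have E1t : pdt (fun x t => r x t * u x t) x s
        = pdt r x s * u x s + r x s * pdt u x s := ((smρ.hdT x s).mul (smuu.hdT x s)).deriv
    have E2 : pdx (fun x t => r x t * u x t ^ 2 + r x t * h x t
          + (b 0 x t ^ 2 + b 1 x t ^ 2) / 2) x s
        = (pdx r x s * u x s ^ 2 + r x s * (2 * u x s * pdx u x s)
            + (pdx r x s * h x s + r x s * pdx h x s))
          + (2 * b 0 x s * pdx (b 0) x s + 2 * b 1 x s * pdx (b 1) x s) / 2 :=
      (((Hr.mul Hu.sq).add (Hr.mul Hh)).add ((Hb0.sq.add Hb1.sq).div_const 2)).deriv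
    have E3t : pdt (fun x t => r x t * w 0 x t) x s
        = pdt r x s * w 0 x s + r x s * pdt (w 0) x s :=
      ((smρ.hdT x s).mul (smw0.hdT x s)).deriv
    have E3x : pdx (fun x t => r x t * u x t * w 0 x t - b 0 x t) x s
        = (pdx r x s * u x s + r x s * pdx u x s) * w 0 x s
            + r x s * u x s * pdx (w 0) x s - pdx (b 0) x s :=
      (((Hr.mul Hu).mul Hw0).sub Hb0).deriv
    have E4t : pdt (fun x t => r x t * w 1 x t) x s
        = pdt r x s * w 1 x s + r x s * pdt (w 1) x s :=
      ((smρ.hdT x s).mul (smw1.hdT x s)).deriv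
    have E4x : pdx (fun x t => r x t * u x t * w 1 x t - b 1 x t) x s
        = (pdx r x s * u x s + r x s * pdx u x s) * w 1 x s
            + r x s * u x s * pdx (w 1) x s - pdx (b 1) x s :=
      (((Hr.mul Hu).mul Hw1).sub Hb1).deriv
    have E5x : pdx (fun x t => u x t * b 0 x t - w 0 x t) x s
        = pdx u x s * b 0 x s + u x s * pdx (b 0) x s - pdx (w 0) x s :=
      ((Hu.mul Hb0).sub Hw0).deriv
    have E6x : pdx (fun x t => u x t * b 1 x t - w 1 x t) x s
        = pdx u x s * b 1 x s + u x s * pdx (b 1) x s - pdx (w 1) x s :=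
      ((Hu.mul Hb1).sub Hw1).deriv
    have E7t : pdt (fun x t => r x t * h x t) x s
        = pdt r x s * h x s + r x s * pdt h x s :=
      ((smρ.hdT x s).mul (smhh.hdT x s)).deriv
    have E7x : pdx (fun x t => r x t * u x t * h x t) x s
        = (pdx r x s * u x s + r x s * pdx u x s) * h x s
            + r x s * u x s * pdx h x s :=
      ((Hr.mul Hu).mul Hh).deriv
    rw [E1] at e1
    rw [E1t, E2] at e2
    rw [E3t, E3x] at e3
    rw [E4t, E4x] at e4
    rw [E5x] at e5
    rw [E6x] at e6
    rw [E7t, E7x] at e7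
    have HAll := ((((((Hu.mul Huxx).add (Hw0.mul Hw0xx)).add (Hw1.mul Hw1xx)).add
        (Hb0.mul Hb0xx)).add (Hb1.mul Hb1xx)).add hκθ).sub
        (Hu.mul ((((Hr.const_mul 2).mul Hh).add
          ((Hr.mul ((Hu.sq.add Hw0.sq).add Hw1.sq)).div_const 2)).add (Hb0.sq.add Hb1.sq)))
        |>.add ((Hw0.mul Hb0).add (Hw1.mul Hb1))
    refine HAll.congr_deriv (Eq.symm ?_)
    simp only [Pi.mul_apply, Pi.sub_apply, Pi.add_apply]
    linear_combination e7 + u x s * e2 + w 0 x s * e3 + w 1 x s * e4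
      + b 0 x s * e5 + b 1 x s * e6
      - ((u x s ^ 2 + w 0 x s ^ 2 + w 1 x s ^ 2)/2) * e1
  · -- hbc
    intro s hs
    obtain ⟨hu0, hu1⟩ := bcu s hs
    obtain ⟨hw00, hw01⟩ := bcw 0 s hs
    obtain ⟨hw10, hw11⟩ := bcw 1 s hs
    obtain ⟨hb00, hb01⟩ := bcb 0 s hs
    obtain ⟨hb10, hb11⟩ := bcb 1 s hs
    obtain ⟨hh0, hh1⟩ := bch s hs
    simp only [hu0, hu1, hw00, hw01, hw10, hw11, hb00, hb01, hb10, hb11, hh0, hh1]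
    ring

lemma entropy_eq {T q C₀ : ℝ} {κ : ℝ → ℝ} (hT : 0 < T) (hκ : KappaHyp q C₀ κ)
    (sol : MHDSol T κ) (hκd : ∀ s : ℝ, 0 < s → DifferentiableAt ℝ κ s) :
    ∀ t ∈ Icc (0:ℝ) T,
      (∫ x in (0:ℝ)..1, sol.ρ x t * (Real.log (sol.θ x t) - Real.log (sol.ρ x t)))
      - (∫ x in (0:ℝ)..1, sol.ρ x 0 * (Real.log (sol.θ x 0) - Real.log (sol.ρ x 0)))
      = ∫ s in (0:ℝ)..t, ∫ y in (0:ℝ)..1,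
          ((pdx sol.u y s) ^ 2 + (∑ i, (pdx (sol.w i) y s) ^ 2)
            + (∑ i, (pdx (sol.b i) y s) ^ 2)) / sol.θ y s
          + κ (sol.θ y s) * (pdx sol.θ y s) ^ 2 / (sol.θ y s) ^ 2 := by
  obtain ⟨r, u, h, w, b, smr, smu, smh, smw, smb, posr, posh,
    emass, emom, ew, eb, eth, bcu, bcw, bcb, bch⟩ := sol
  simp only
  have smρ : Sm r := smr
  have smuu : Sm u := smu
  have smhh : Sm h := smh
  have smw0 : Sm (w 0) := smw 0
  have smw1 : Sm (w 1) := smw 1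
  have smb0 : Sm (b 0) := smb 0
  have smb1 : Sm (b 1) := smb 1
  obtain ⟨ε, hε, hext⟩ := extend_pos hT r h smρ.cont smhh.cont
    (fun x hx t ht => ⟨posr x hx t ht, posh x hx t ht⟩)
  have main := key (ε := ε) hT hε
    (fun x t => r x t * (Real.log (h x t) - Real.log (r x t)))
    (fun x s => pdt r x s * (Real.log (h x s) - Real.log (r x s))
        + r x s * ((h x s)⁻¹ * pdt h x s - (r x s)⁻¹ * pdt r x s))
    (fun y s => ((pdx u y s) ^ 2 + (∑ i, (pdx (w i) y s) ^ 2)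
            + (∑ i, (pdx (b i) y s) ^ 2)) / h y s
          + κ (h y s) * (pdx h y s) ^ 2 / (h y s) ^ 2)
    (fun y s => κ (h y s) * pdx h y s * (h y s)⁻¹
        - r y s * u y s * (Real.log (h y s) - Real.log (r y s)))
    ?_ ?_ ?_ ?_ ?_ ?_
  · exact fun t ht => main t ht
  · -- hIc
    show ContinuousOn (fun p : ℝ × ℝ => r p.1 p.2 * (Real.log (h p.1 p.2) - Real.log (r p.1 p.2)))
      (Icc 0 1 ×ˢ Ioo (-ε) (T+ε))
    have cr : ContinuousOn (fun p : ℝ × ℝ => r p.1 p.2) (Icc 0 1 ×ˢ Ioo (-ε) (T+ε)) :=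
      smρ.cont.continuousOn
    have ch : ContinuousOn (fun p : ℝ × ℝ => h p.1 p.2) (Icc 0 1 ×ˢ Ioo (-ε) (T+ε)) :=
      smhh.cont.continuousOn
    have hrne : ∀ p ∈ Icc (0:ℝ) 1 ×ˢ Ioo (-ε) (T+ε), r p.1 p.2 ≠ 0 := by
      intro p hp; exact ne_of_gt (hext p.1 hp.1 p.2 hp.2).1
    have hhne : ∀ p ∈ Icc (0:ℝ) 1 ×ˢ Ioo (-ε) (T+ε), h p.1 p.2 ≠ 0 := by
      intro p hp; exact ne_of_gt (hext p.1 hp.1 p.2 hp.2).2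
    exact cr.mul ((ch.log hhne).sub (cr.log hrne))
  · -- hItc
    show ContinuousOn (fun p : ℝ × ℝ => pdt r p.1 p.2 * (Real.log (h p.1 p.2) - Real.log (r p.1 p.2))
        + r p.1 p.2 * ((h p.1 p.2)⁻¹ * pdt h p.1 p.2 - (r p.1 p.2)⁻¹ * pdt r p.1 p.2))
      (Icc 0 1 ×ˢ Ioo (-ε) (T+ε))
    have cr : ContinuousOn (fun p : ℝ × ℝ => r p.1 p.2) (Icc 0 1 ×ˢ Ioo (-ε) (T+ε)) :=
      smρ.cont.continuousOn
    have ch : ContinuousOn (fun p : ℝ × ℝ => h p.1 p.2) (Icc 0 1 ×ˢ Ioo (-ε) (T+ε)) :=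
      smhh.cont.continuousOn
    have crt : ContinuousOn (fun p : ℝ × ℝ => pdt r p.1 p.2) (Icc 0 1 ×ˢ Ioo (-ε) (T+ε)) :=
      smρ.pdT.cont.continuousOn
    have cht : ContinuousOn (fun p : ℝ × ℝ => pdt h p.1 p.2) (Icc 0 1 ×ˢ Ioo (-ε) (T+ε)) :=
      smhh.pdT.cont.continuousOn
    have hrne : ∀ p ∈ Icc (0:ℝ) 1 ×ˢ Ioo (-ε) (T+ε), r p.1 p.2 ≠ 0 := by
      intro p hp; exact ne_of_gt (hext p.1 hp.1 p.2 hp.2).1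
    have hhne : ∀ p ∈ Icc (0:ℝ) 1 ×ˢ Ioo (-ε) (T+ε), h p.1 p.2 ≠ 0 := by
      intro p hp; exact ne_of_gt (hext p.1 hp.1 p.2 hp.2).2
    exact (crt.mul ((ch.log hhne).sub (cr.log hrne))).add
      (cr.mul (((ch.inv₀ hhne).mul cht).sub ((cr.inv₀ hrne).mul crt)))
  · -- hSc
    simp only [Fin.sum_univ_two]
    show ContinuousOn (fun p : ℝ × ℝ =>
        ((pdx u p.1 p.2) ^ 2 + ((pdx (w 0) p.1 p.2) ^ 2 + (pdx (w 1) p.1 p.2) ^ 2)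
          + ((pdx (b 0) p.1 p.2) ^ 2 + (pdx (b 1) p.1 p.2) ^ 2)) / h p.1 p.2
        + κ (h p.1 p.2) * (pdx h p.1 p.2) ^ 2 / (h p.1 p.2) ^ 2)
      (Icc 0 1 ×ˢ Ioo (-ε) (T+ε))
    have ch : ContinuousOn (fun p : ℝ × ℝ => h p.1 p.2) (Icc 0 1 ×ˢ Ioo (-ε) (T+ε)) :=
      smhh.cont.continuousOn
    have hhne : ∀ p ∈ Icc (0:ℝ) 1 ×ˢ Ioo (-ε) (T+ε), h p.1 p.2 ≠ 0 := by
      intro p hp; exact ne_of_gt (hext p.1 hp.1 p.2 hp.2).2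
    have cκ : ContinuousOn (fun p : ℝ × ℝ => κ (h p.1 p.2)) (Icc 0 1 ×ˢ Ioo (-ε) (T+ε)) := by
      apply (hκ.1.continuousOn).comp ch
      intro p hp
      exact le_of_lt (hext p.1 hp.1 p.2 hp.2).2
    have cux : ContinuousOn (fun p : ℝ × ℝ => pdx u p.1 p.2) (Icc 0 1 ×ˢ Ioo (-ε) (T+ε)) :=
      smuu.pdX.cont.continuousOn
    have cw0x : ContinuousOn (fun p : ℝ × ℝ => pdx (w 0) p.1 p.2) (Icc 0 1 ×ˢ Ioo (-ε) (T+ε)) :=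
      smw0.pdX.cont.continuousOn
    have cw1x : ContinuousOn (fun p : ℝ × ℝ => pdx (w 1) p.1 p.2) (Icc 0 1 ×ˢ Ioo (-ε) (T+ε)) :=
      smw1.pdX.cont.continuousOn
    have cb0x : ContinuousOn (fun p : ℝ × ℝ => pdx (b 0) p.1 p.2) (Icc 0 1 ×ˢ Ioo (-ε) (T+ε)) :=
      smb0.pdX.cont.continuousOn
    have cb1x : ContinuousOn (fun p : ℝ × ℝ => pdx (b 1) p.1 p.2) (Icc 0 1 ×ˢ Ioo (-ε) (T+ε)) :=
      smb1.pdX.cont.continuousOn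
    have chx : ContinuousOn (fun p : ℝ × ℝ => pdx h p.1 p.2) (Icc 0 1 ×ˢ Ioo (-ε) (T+ε)) :=
      smhh.pdX.cont.continuousOn
    have hh2ne : ∀ p ∈ Icc (0:ℝ) 1 ×ˢ Ioo (-ε) (T+ε), (h p.1 p.2) ^ 2 ≠ 0 := by
      intro p hp; exact pow_ne_zero 2 (hhne p hp)
    exact ((((cux.pow 2).add ((cw0x.pow 2).add (cw1x.pow 2))).add
      ((cb0x.pow 2).add (cb1x.pow 2))).div ch hhne).add
      ((cκ.mul (chx.pow 2)).div (ch.pow 2) hh2ne)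
  · -- hdiff
    intro x hx s hs
    have hrpos := (hext x hx s hs).1
    have hhpos := (hext x hx s hs).2
    have Hlogh : HasDerivAt (fun s' => Real.log (h x s')) ((h x s)⁻¹ * pdt h x s) s :=
      (Real.hasDerivAt_log (ne_of_gt hhpos)).comp s (smhh.hdT x s)
    have Hlogr : HasDerivAt (fun s' => Real.log (r x s')) ((r x s)⁻¹ * pdt r x s) s :=
      (Real.hasDerivAt_log (ne_of_gt hrpos)).comp s (smρ.hdT x s)
    exact (smρ.hdT x s).mul (Hlogh.sub Hlogr)
  · -- hflux
    intro s hs x hx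
    have hrpos := posr x hx s hs
    have hhpos := posh x hx s hs
    have Hr := smρ.hdX x s
    have Hu := smuu.hdX x s
    have Hh := smhh.hdX x s
    have hκθ : HasDerivAt (fun y => κ (h y s) * pdx h y s)
        (pdx (fun x t => κ (h x t) * pdx h x t) x s) x := by
      apply DifferentiableAt.hasDerivAt
      apply DifferentiableAt.mul
      · exact (hκd (h x s) hhpos).comp x ((smhh.sliceX s).differentiable (by simp) x)
      · exact ((smhh.pdX.sliceX s).differentiable (by simp) x)
    have Hinv : HasDerivAt (fun y => (h y s)⁻¹) (-pdx h x s / h x s ^ 2) x :=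
      Hh.inv (ne_of_gt hhpos)
    have Hlogh : HasDerivAt (fun y => Real.log (h y s)) ((h x s)⁻¹ * pdx h x s) x :=
      by simpa [div_eq_inv_mul] using Hh.log (ne_of_gt hhpos)
    have Hlogr : HasDerivAt (fun y => Real.log (r y s)) ((r x s)⁻¹ * pdx r x s) x :=
      by simpa [div_eq_inv_mul] using Hr.log (ne_of_gt hrpos)
    have e1 := emass x hx s hs
    have e7 := eth x hx s hs
    simp only [Fin.sum_univ_two] at e7
    have E1 : pdx (fun x t => r x t * u x t) x s
        = pdx r x s * u x s + r x s * pdx u x s := (Hr.mul Hu).deriv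
    have E7t : pdt (fun x t => r x t * h x t) x s
        = pdt r x s * h x s + r x s * pdt h x s :=
      ((smρ.hdT x s).mul (smhh.hdT x s)).deriv
    have E7x : pdx (fun x t => r x t * u x t * h x t) x s
        = (pdx r x s * u x s + r x s * pdx u x s) * h x s
            + r x s * u x s * pdx h x s :=
      ((Hr.mul Hu).mul Hh).deriv
    rw [E1] at e1
    rw [E7t, E7x] at e7
    have hrt : pdt r x s = -(pdx r x s * u x s + r x s * pdx u x s) := by linarith
    have hK : pdx (fun x t => κ (h x t) * pdx h x t) x s
        = pdt r x s * h x s + r x s * pdt h x s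
          + ((pdx r x s * u x s + r x s * pdx u x s) * h x s + r x s * u x s * pdx h x s)
          - ((pdx u x s) ^ 2 + ((pdx (w 0) x s) ^ 2 + (pdx (w 1) x s) ^ 2)
            + ((pdx (b 0) x s) ^ 2 + (pdx (b 1) x s) ^ 2) - r x s * h x s * pdx u x s) := by
      linarith
    have HAll := (hκθ.mul Hinv).sub ((Hr.mul Hu).mul (Hlogh.sub Hlogr))
    refine HAll.congr_deriv (Eq.symm ?_)
    simp only [Pi.mul_apply, Pi.sub_apply, Pi.add_apply, Fin.sum_univ_two]
    rw [hK, hrt]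
    field_simp
    ring
  · -- hbc
    intro s hs
    obtain ⟨hu0, hu1⟩ := bcu s hs
    obtain ⟨hh0, hh1⟩ := bch s hs
    simp only [hu0, hu1, hh0, hh1]
    ring

/-- Lemma 2.1, third estimate: there is a constant `C` depending only
on `T, q, C₀` and on upper bounds `A₁` for the initial total energy, `A₂` for the
initial total mass and `A₃` for `∫₀¹ ρ₀(|ln ρ₀| + |ln θ₀|) dx`, such that every smooth
solution satisfies, for all `t ∈ [0,T]`,
`∫₀¹ (ρ ln ρ + ρ|ln θ|)(x,t) dx
  + ∬_{Q_T} [(u_x² + |w_x|² + |b_x|²)/θ + κ(θ)θ_x²/θ²] dx dt ≤ C`. -/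
theorem stmt6 (T q C₀ : ℝ) (hT : 0 < T) (hq : 0 < q) (hC₀ : 1 ≤ C₀)
    (κ : ℝ → ℝ) (hκ : KappaHyp q C₀ κ) (A₁ A₂ A₃ : ℝ) :
    ∃ C : ℝ, 0 < C ∧ ∀ sol : MHDSol T κ,
      (∫ x in (0:ℝ)..1,
          sol.ρ x 0 * (sol.θ x 0 + ((sol.u x 0) ^ 2 + ∑ i, (sol.w i x 0) ^ 2) / 2)
          + (∑ i, (sol.b i x 0) ^ 2) / 2) ≤ A₁ →
      (∫ x in (0:ℝ)..1, sol.ρ x 0) ≤ A₂ →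
      (∫ x in (0:ℝ)..1,
          sol.ρ x 0 * (|Real.log (sol.ρ x 0)| + |Real.log (sol.θ x 0)|)) ≤ A₃ →
      ∀ t ∈ Set.Icc (0:ℝ) T,
        (∫ x in (0:ℝ)..1,
            sol.ρ x t * Real.log (sol.ρ x t) + sol.ρ x t * |Real.log (sol.θ x t)|)
        + (∫ s in (0:ℝ)..T, ∫ y in (0:ℝ)..1,
            ((pdx sol.u y s) ^ 2 + (∑ i, (pdx (sol.w i) y s) ^ 2)
              + (∑ i, (pdx (sol.b i) y s) ^ 2)) / sol.θ y s
            + κ (sol.θ y s) * (pdx sol.θ y s) ^ 2 / (sol.θ y s) ^ 2) ≤ C := by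
  have hκd : ∀ s : ℝ, 0 < s → DifferentiableAt ℝ κ s := by
    intro s hs
    have h1 : DifferentiableOn ℝ κ (Ici 0) := hκ.1.differentiableOn (by norm_num)
    exact (h1 s (le_of_lt hs)).differentiableAt (Ici_mem_nhds hs)
  refine ⟨4 * |A₁| + 3 * |A₃| + 3, by positivity, ?_⟩
  intro sol hA1 hA2 hA3 t ht
  have h01 : (0:ℝ) ≤ 1 := by norm_num
  have huIcc : uIcc (0:ℝ) 1 = Icc 0 1 := uIcc_of_le h01
  have h0T : (0:ℝ) ∈ Icc (0:ℝ) T := ⟨le_refl 0, hT.le⟩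
  have hTT : T ∈ Icc (0:ℝ) T := ⟨hT.le, le_refl T⟩
  have hII : ∀ f : ℝ → ℝ, ContinuousOn f (Icc 0 1) → IntervalIntegrable f volume 0 1 := by
    intro f hf
    apply ContinuousOn.intervalIntegrable
    rw [huIcc]; exact hf
  -- continuity of slices
  have cρ : ∀ τ, Continuous fun x => sol.ρ x τ := fun τ => (Sm.sliceX sol.smooth_ρ τ).continuous
  have cθ : ∀ τ, Continuous fun x => sol.θ x τ := fun τ => (Sm.sliceX sol.smooth_θ τ).continuous
  have cu : ∀ τ, Continuous fun x => sol.u x τ := fun τ => (Sm.sliceX sol.smooth_u τ).continuous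
  have cw : ∀ i τ, Continuous fun x => sol.w i x τ :=
    fun i τ => (Sm.sliceX (sol.smooth_w i) τ).continuous
  have cb : ∀ i τ, Continuous fun x => sol.b i x τ :=
    fun i τ => (Sm.sliceX (sol.smooth_b i) τ).continuous
  have clogρ : ∀ τ ∈ Icc (0:ℝ) T, ContinuousOn (fun x => Real.log (sol.ρ x τ)) (Icc 0 1) :=
    fun τ hτ => ContinuousOn.log ((cρ τ).continuousOn)
      (fun x hx => ne_of_gt (sol.ρ_pos x hx τ hτ))
  have clogθ : ∀ τ ∈ Icc (0:ℝ) T, ContinuousOn (fun x => Real.log (sol.θ x τ)) (Icc 0 1) :=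
    fun τ hτ => ContinuousOn.log ((cθ τ).continuousOn)
      (fun x hx => ne_of_gt (sol.θ_pos x hx τ hτ))
  -- integrability
  have I_ρθ : ∀ τ ∈ Icc (0:ℝ) T,
      IntervalIntegrable (fun x => sol.ρ x τ * sol.θ x τ) volume 0 1 :=
    fun τ _ => hII _ (((cρ τ).mul (cθ τ)).continuousOn)
  have I_ed : ∀ τ ∈ Icc (0:ℝ) T, IntervalIntegrable (fun x => sol.ρ x τ * sol.θ x τ
      + sol.ρ x τ * ((sol.u x τ)^2 + (sol.w 0 x τ)^2 + (sol.w 1 x τ)^2)/2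
      + ((sol.b 0 x τ)^2 + (sol.b 1 x τ)^2)/2) volume 0 1 := by
    intro τ _
    apply hII
    apply Continuous.continuousOn
    exact ((cρ τ).mul (cθ τ)).add
      (((cρ τ).mul ((((cu τ).pow 2).add ((cw 0 τ).pow 2)).add ((cw 1 τ).pow 2))).div_const 2)
      |>.add ((((cb 0 τ).pow 2).add ((cb 1 τ).pow 2)).div_const 2)
  have I_l1 : ∀ τ ∈ Icc (0:ℝ) T,
      IntervalIntegrable (fun x => sol.ρ x τ * Real.log (sol.ρ x τ)) volume 0 1 :=
    fun τ hτ => hII _ (((cρ τ).continuousOn).mul (clogρ τ hτ))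
  have I_l2 : ∀ τ ∈ Icc (0:ℝ) T,
      IntervalIntegrable (fun x => sol.ρ x τ * Real.log (sol.θ x τ)) volume 0 1 :=
    fun τ hτ => hII _ (((cρ τ).continuousOn).mul (clogθ τ hτ))
  have I_ent : ∀ τ ∈ Icc (0:ℝ) T, IntervalIntegrable
      (fun x => sol.ρ x τ * (Real.log (sol.θ x τ) - Real.log (sol.ρ x τ))) volume 0 1 :=
    fun τ hτ => hII _ (((cρ τ).continuousOn).mul ((clogθ τ hτ).sub (clogρ τ hτ)))
  have I_abs : ∀ τ ∈ Icc (0:ℝ) T,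
      IntervalIntegrable (fun x => sol.ρ x τ * |Real.log (sol.θ x τ)|) volume 0 1 :=
    fun τ hτ => hII _ (((cρ τ).continuousOn).mul (clogθ τ hτ).abs)
  -- energy estimate
  have hE := energy_eq hT sol hκd
  have hE0 : (∫ x in (0:ℝ)..1, sol.ρ x 0 * sol.θ x 0
      + sol.ρ x 0 * ((sol.u x 0)^2 + (sol.w 0 x 0)^2 + (sol.w 1 x 0)^2)/2
      + ((sol.b 0 x 0)^2 + (sol.b 1 x 0)^2)/2) ≤ A₁ := by
    have heq : (∫ x in (0:ℝ)..1, sol.ρ x 0 * sol.θ x 0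
        + sol.ρ x 0 * ((sol.u x 0)^2 + (sol.w 0 x 0)^2 + (sol.w 1 x 0)^2)/2
        + ((sol.b 0 x 0)^2 + (sol.b 1 x 0)^2)/2)
        = ∫ x in (0:ℝ)..1,
          sol.ρ x 0 * (sol.θ x 0 + ((sol.u x 0) ^ 2 + ∑ i, (sol.w i x 0) ^ 2) / 2)
          + (∑ i, (sol.b i x 0) ^ 2) / 2 := by
      apply intervalIntegral.integral_congr
      intro x _
      simp only [Fin.sum_univ_two]
      ring
    rw [heq]; exact hA1
  have hP : ∀ τ ∈ Icc (0:ℝ) T, (∫ x in (0:ℝ)..1, sol.ρ x τ * sol.θ x τ) ≤ A₁ := by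
    intro τ hτ
    have hmono : (∫ x in (0:ℝ)..1, sol.ρ x τ * sol.θ x τ)
        ≤ ∫ x in (0:ℝ)..1, sol.ρ x τ * sol.θ x τ
          + sol.ρ x τ * ((sol.u x τ)^2 + (sol.w 0 x τ)^2 + (sol.w 1 x τ)^2)/2
          + ((sol.b 0 x τ)^2 + (sol.b 1 x τ)^2)/2 := by
      apply intervalIntegral.integral_mono_on h01 (I_ρθ τ hτ) (I_ed τ hτ)
      intro x hx
      have h1 : 0 ≤ sol.ρ x τ * ((sol.u x τ)^2 + (sol.w 0 x τ)^2 + (sol.w 1 x τ)^2)/2 := by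
        apply div_nonneg _ (by norm_num)
        exact mul_nonneg (sol.ρ_pos x hx τ hτ).le (by positivity)
      have h2 : (0:ℝ) ≤ ((sol.b 0 x τ)^2 + (sol.b 1 x τ)^2)/2 := by positivity
      linarith
    rw [hE τ hτ] at hmono
    linarith
  have hL2P : ∀ τ ∈ Icc (0:ℝ) T, (∫ x in (0:ℝ)..1, sol.ρ x τ * Real.log (sol.θ x τ))
      ≤ ∫ x in (0:ℝ)..1, sol.ρ x τ * sol.θ x τ := by
    intro τ hτ
    apply intervalIntegral.integral_mono_on h01 (I_l2 τ hτ) (I_ρθ τ hτ)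
    intro x hx
    have hθp := sol.θ_pos x hx τ hτ
    have hlog := Real.log_le_sub_one_of_pos hθp
    exact mul_le_mul_of_nonneg_left (by linarith) (sol.ρ_pos x hx τ hτ).le
  have hSplit : ∀ τ ∈ Icc (0:ℝ) T,
      (∫ x in (0:ℝ)..1, sol.ρ x τ * (Real.log (sol.θ x τ) - Real.log (sol.ρ x τ)))
      = (∫ x in (0:ℝ)..1, sol.ρ x τ * Real.log (sol.θ x τ))
        - ∫ x in (0:ℝ)..1, sol.ρ x τ * Real.log (sol.ρ x τ) := by
    intro τ hτ
    rw [← intervalIntegral.integral_sub (I_l2 τ hτ) (I_l1 τ hτ)]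
    apply intervalIntegral.integral_congr
    intro x _
    ring
  -- entropy identity
  have hS := entropy_eq hT hκ sol hκd
  -- nonnegativity of dissipation
  have hinner : ∀ s ∈ Icc (0:ℝ) T, 0 ≤ ∫ y in (0:ℝ)..1,
      ((pdx sol.u y s) ^ 2 + (∑ i, (pdx (sol.w i) y s) ^ 2)
        + (∑ i, (pdx (sol.b i) y s) ^ 2)) / sol.θ y s
      + κ (sol.θ y s) * (pdx sol.θ y s) ^ 2 / (sol.θ y s) ^ 2 := by
    intro s hs
    apply intervalIntegral.integral_nonneg h01
    intro y hy
    have hθp := sol.θ_pos y hy s hs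
    have hκpos : 0 ≤ κ (sol.θ y s) := by
      have hlb := hκ.2.1 (sol.θ y s) hθp.le
      have h1 : 0 ≤ (sol.θ y s) ^ q := Real.rpow_nonneg hθp.le q
      have h2 : (0:ℝ) < C₀⁻¹ := inv_pos.mpr (by linarith)
      nlinarith
    have hnum : 0 ≤ (pdx sol.u y s) ^ 2 + (∑ i, (pdx (sol.w i) y s) ^ 2)
        + (∑ i, (pdx (sol.b i) y s) ^ 2) := by
      have := Finset.sum_nonneg (fun i (_ : i ∈ Finset.univ) => sq_nonneg (pdx (sol.w i) y s))
      have := Finset.sum_nonneg (fun i (_ : i ∈ Finset.univ) => sq_nonneg (pdx (sol.b i) y s))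
      positivity
    apply add_nonneg
    · exact div_nonneg hnum hθp.le
    · apply div_nonneg (mul_nonneg hκpos (sq_nonneg _)) (sq_nonneg _)
  have hDt : 0 ≤ ∫ s in (0:ℝ)..t, ∫ y in (0:ℝ)..1,
      ((pdx sol.u y s) ^ 2 + (∑ i, (pdx (sol.w i) y s) ^ 2)
        + (∑ i, (pdx (sol.b i) y s) ^ 2)) / sol.θ y s
      + κ (sol.θ y s) * (pdx sol.θ y s) ^ 2 / (sol.θ y s) ^ 2 := by
    apply intervalIntegral.integral_nonneg ht.1
    intro s hs
    exact hinner s ⟨hs.1, le_trans hs.2 ht.2⟩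
  -- S0 ≥ -A₃
  have hS0 : -A₃ ≤ ∫ x in (0:ℝ)..1,
      sol.ρ x 0 * (Real.log (sol.θ x 0) - Real.log (sol.ρ x 0)) := by
    have hmono : (∫ x in (0:ℝ)..1,
        -(sol.ρ x 0 * (Real.log (sol.θ x 0) - Real.log (sol.ρ x 0))))
        ≤ ∫ x in (0:ℝ)..1, sol.ρ x 0 * (|Real.log (sol.ρ x 0)| + |Real.log (sol.θ x 0)|) := by
      apply intervalIntegral.integral_mono_on h01 ((I_ent 0 h0T).neg)
      · exact hII _ (((cρ 0).continuousOn).mul ((clogρ 0 h0T).abs.add (clogθ 0 h0T).abs))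
      intro x hx
      simp only [Pi.neg_apply]
      have hρp := sol.ρ_pos x hx 0 h0T
      have h1 := le_abs_self (Real.log (sol.ρ x 0))
      have h2 := neg_abs_le (Real.log (sol.θ x 0))
      nlinarith
    rw [intervalIntegral.integral_neg] at hmono
    linarith
  -- -L1 ≤ 1
  have hnegL1 : ∀ τ ∈ Icc (0:ℝ) T,
      -(∫ x in (0:ℝ)..1, sol.ρ x τ * Real.log (sol.ρ x τ)) ≤ 1 := by
    intro τ hτ
    have hmono : (∫ x in (0:ℝ)..1, -(sol.ρ x τ * Real.log (sol.ρ x τ)))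
        ≤ ∫ _x in (0:ℝ)..1, (1:ℝ) := by
      apply intervalIntegral.integral_mono_on h01 ((I_l1 τ hτ).neg) intervalIntegrable_const
      intro x hx
      simp only [Pi.neg_apply]
      have hρp := sol.ρ_pos x hx τ hτ
      have hlog := Real.log_le_sub_one_of_pos (inv_pos.mpr hρp)
      rw [Real.log_inv] at hlog
      have hmul := mul_le_mul_of_nonneg_left hlog hρp.le
      have hinv : sol.ρ x τ * (sol.ρ x τ)⁻¹ = 1 := mul_inv_cancel₀ (ne_of_gt hρp)
      nlinarith
    rw [intervalIntegral.integral_neg] at hmono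
    simp only [intervalIntegral.integral_const, smul_eq_mul, sub_zero, mul_one] at hmono
    linarith
  -- |log θ| bound
  have hAbs : ∀ τ ∈ Icc (0:ℝ) T,
      (∫ x in (0:ℝ)..1, sol.ρ x τ * |Real.log (sol.θ x τ)|)
      ≤ 2 * (∫ x in (0:ℝ)..1, sol.ρ x τ * sol.θ x τ)
        - ∫ x in (0:ℝ)..1, sol.ρ x τ * Real.log (sol.θ x τ) := by
    intro τ hτ
    have hmono : (∫ x in (0:ℝ)..1, sol.ρ x τ * |Real.log (sol.θ x τ)|)
        ≤ ∫ x in (0:ℝ)..1, (2 * (sol.ρ x τ * sol.θ x τ) - sol.ρ x τ * Real.log (sol.θ x τ)) := by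
      apply intervalIntegral.integral_mono_on h01 (I_abs τ hτ)
        (((I_ρθ τ hτ).const_mul 2).sub (I_l2 τ hτ))
      intro x hx
      have hρp := sol.ρ_pos x hx τ hτ
      have hθp := sol.θ_pos x hx τ hτ
      have hlog := Real.log_le_sub_one_of_pos hθp
      have habs : |Real.log (sol.θ x τ)| ≤ 2 * sol.θ x τ - Real.log (sol.θ x τ) := by
        apply abs_le.mpr
        constructor <;> nlinarith
      nlinarith [mul_le_mul_of_nonneg_left habs hρp.le]
    rw [intervalIntegral.integral_sub (((I_ρθ τ hτ)).const_mul 2) (I_l2 τ hτ),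
      intervalIntegral.integral_const_mul] at hmono
    linarith
  -- final assembly
  have hSt := hS t ht
  have hST := hS T hTT
  rw [intervalIntegral.integral_add (I_l1 t ht) (I_abs t ht)]
  have e1 := hSplit t ht
  have e2 := hSplit T hTT
  have e3 := hP t ht
  have e4 := hP T hTT
  have e5 := hL2P t ht
  have e6 := hL2P T hTT
  have e7 := hnegL1 t ht
  have e8 := hnegL1 T hTT
  have e9 := hAbs t ht
  have e10 := le_abs_self A₁
  have e11 := le_abs_self A₃
  linarith
end
end

section
/- There exists a constant C depending only on T, q, C₀ and on the initial data ρ₀,u₀,w₀,b₀,θ₀ — specifically on upper bounds for their H²((0,1))-norms, an upper bound for ∫₀¹ ρ₀(|ln ρ₀| + |ln θ₀|) dx, and a positive lower bound for ∫₀¹ ρ₀ dx — but not on the pointwise lower bounds of ρ₀ and θ₀, such that every smooth solution (ρ,u,w,b,θ) of the planar compressible MHD system on Q_T satisfies, for every t ∈ [0,T]: (sup_{x∈[0,1]} θ(x,t))^{q+1} ≤ C (1 + (∫₀¹ κ(θ(x,t))² θ_x(x,t)² dx)^{1/2}). -/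
open Real MeasureTheory Set

noncomputable section

section infra
variable {f : ℝ → ℝ → ℝ}

theorem slicex_contDiff (hf : ContDiff ℝ (⊤ : ℕ∞) (Function.uncurry f)) (t : ℝ) :
    ContDiff ℝ (⊤ : ℕ∞) (fun x => f x t) := hf.comp (contDiff_id.prodMk contDiff_const)

theorem slicet_contDiff (hf : ContDiff ℝ (⊤ : ℕ∞) (Function.uncurry f)) (x : ℝ) :
    ContDiff ℝ (⊤ : ℕ∞) (fun s => f x s) := hf.comp (contDiff_const.prodMk contDiff_id)

theorem hasDerivAt_pdx (hf : ContDiff ℝ (⊤ : ℕ∞) (Function.uncurry f)) (x t : ℝ) :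
    HasDerivAt (fun y => f y t) (pdx f x t) x :=
  (((slicex_contDiff hf t).differentiable (by simp)) x).hasDerivAt

theorem hasDerivAt_pdt (hf : ContDiff ℝ (⊤ : ℕ∞) (Function.uncurry f)) (x t : ℝ) :
    HasDerivAt (fun s => f x s) (pdt f x t) t :=
  (((slicet_contDiff hf x).differentiable (by simp)) t).hasDerivAt

theorem pdx_smooth (hf : ContDiff ℝ (⊤ : ℕ∞) (Function.uncurry f)) :
    ContDiff ℝ (⊤ : ℕ∞) (Function.uncurry (pdx f)) := by
  have h1 : ∀ p : ℝ × ℝ, HasDerivAt (fun y => f y p.2)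
      (fderiv ℝ (Function.uncurry f) p ((1:ℝ), (0:ℝ))) p.1 := by
    intro p
    have hg : HasDerivAt (fun y : ℝ => (y, p.2)) ((1:ℝ), (0:ℝ)) p.1 :=
      (hasDerivAt_id p.1).prodMk (hasDerivAt_const p.1 p.2)
    have hF := ((hf.differentiable (by simp)) p).hasFDerivAt
    have := hF.comp_hasDerivAt p.1 hg
    exact this
  have heq : Function.uncurry (pdx f) = fun p : ℝ × ℝ =>
      fderiv ℝ (Function.uncurry f) p ((1:ℝ), (0:ℝ)) := funext fun p => (h1 p).deriv
  rw [heq]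
  exact (hf.fderiv_right (by simp)).clm_apply contDiff_const

theorem pdt_smooth (hf : ContDiff ℝ (⊤ : ℕ∞) (Function.uncurry f)) :
    ContDiff ℝ (⊤ : ℕ∞) (Function.uncurry (pdt f)) := by
  have h1 : ∀ p : ℝ × ℝ, HasDerivAt (fun s => f p.1 s)
      (fderiv ℝ (Function.uncurry f) p ((0:ℝ), (1:ℝ))) p.2 := by
    intro p
    have hg : HasDerivAt (fun s : ℝ => (p.1, s)) ((0:ℝ), (1:ℝ)) p.2 :=
      (hasDerivAt_const p.2 p.1).prodMk (hasDerivAt_id p.2)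
    have hF := ((hf.differentiable (by simp)) p).hasFDerivAt
    have := hF.comp_hasDerivAt p.2 hg
    exact this
  have heq : Function.uncurry (pdt f) = fun p : ℝ × ℝ =>
      fderiv ℝ (Function.uncurry f) p ((0:ℝ), (1:ℝ)) := funext fun p => (h1 p).deriv
  rw [heq]
  exact (hf.fderiv_right (by simp)).clm_apply contDiff_const

theorem diffAt_x (hf : ContDiff ℝ (⊤ : ℕ∞) (Function.uncurry f)) (x t : ℝ) :
    DifferentiableAt ℝ (fun y => f y t) x :=
  ((slicex_contDiff hf t).differentiable (by simp)) x

end infra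

/-- The total energy density. -/
def Efun {T : ℝ} {κ : ℝ → ℝ} (sol : MHDSol T κ) : ℝ → ℝ → ℝ := fun x t =>
  sol.ρ x t * sol.u x t ^ 2 / 2
  + sol.ρ x t * (sol.w 0 x t ^ 2 + sol.w 1 x t ^ 2) / 2
  + (sol.b 0 x t ^ 2 + sol.b 1 x t ^ 2) / 2
  + sol.ρ x t * sol.θ x t

/-- The energy flux. -/
def Ffun {T : ℝ} (κ : ℝ → ℝ) (sol : MHDSol T κ) : ℝ → ℝ → ℝ := fun x t =>
  sol.ρ x t * sol.u x t
      * (sol.u x t ^ 2 / 2 + (sol.w 0 x t ^ 2 + sol.w 1 x t ^ 2) / 2 + sol.θ x t)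
  + sol.u x t * (sol.ρ x t * sol.θ x t)
  + sol.u x t * (sol.b 0 x t ^ 2 + sol.b 1 x t ^ 2)
  - (sol.w 0 x t * sol.b 0 x t + sol.w 1 x t * sol.b 1 x t)
  - (sol.u x t * pdx sol.u x t + sol.w 0 x t * pdx (sol.w 0) x t
      + sol.w 1 x t * pdx (sol.w 1) x t + sol.b 0 x t * pdx (sol.b 0) x t
      + sol.b 1 x t * pdx (sol.b 1) x t + κ (sol.θ x t) * pdx sol.θ x t)

theorem energy_identity {T : ℝ} {κ : ℝ → ℝ} (hκ : ContDiffOn ℝ 2 κ (Set.Ici 0))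
    (sol : MHDSol T κ) {x t : ℝ} (hx : x ∈ Set.Icc (0:ℝ) 1) (ht : t ∈ Set.Icc (0:ℝ) T) :
    pdt (Efun sol) x t + pdx (Ffun κ sol) x t = 0 := by
  -- base derivative facts
  have hρx := hasDerivAt_pdx sol.smooth_ρ x t
  have hux := hasDerivAt_pdx sol.smooth_u x t
  have hθx := hasDerivAt_pdx sol.smooth_θ x t
  have hw0x := hasDerivAt_pdx (sol.smooth_w 0) x t
  have hw1x := hasDerivAt_pdx (sol.smooth_w 1) x t
  have hb0x := hasDerivAt_pdx (sol.smooth_b 0) x t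
  have hb1x := hasDerivAt_pdx (sol.smooth_b 1) x t
  have hρt := hasDerivAt_pdt sol.smooth_ρ x t
  have hut := hasDerivAt_pdt sol.smooth_u x t
  have hθt := hasDerivAt_pdt sol.smooth_θ x t
  have hw0t := hasDerivAt_pdt (sol.smooth_w 0) x t
  have hw1t := hasDerivAt_pdt (sol.smooth_w 1) x t
  have hb0t := hasDerivAt_pdt (sol.smooth_b 0) x t
  have hb1t := hasDerivAt_pdt (sol.smooth_b 1) x t
  have hpux := hasDerivAt_pdx (pdx_smooth sol.smooth_u) x t
  have hpw0x := hasDerivAt_pdx (pdx_smooth (sol.smooth_w 0)) x t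
  have hpw1x := hasDerivAt_pdx (pdx_smooth (sol.smooth_w 1)) x t
  have hpb0x := hasDerivAt_pdx (pdx_smooth (sol.smooth_b 0)) x t
  have hpb1x := hasDerivAt_pdx (pdx_smooth (sol.smooth_b 1)) x t
  have hpθx := hasDerivAt_pdx (pdx_smooth sol.smooth_θ) x t
  -- the κ-term
  have hθpos : 0 < sol.θ x t := sol.θ_pos x hx t ht
  have hκθ : DifferentiableAt ℝ (fun y => κ (sol.θ y t)) x := by
    have h1 : DifferentiableAt ℝ κ (sol.θ x t) :=
      (hκ.contDiffAt (Ici_mem_nhds hθpos)).differentiableAt (by norm_num)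
    exact h1.comp x (diffAt_x sol.smooth_θ x t)
  have hKx : HasDerivAt (fun y => κ (sol.θ y t) * pdx sol.θ y t)
      (pdx (fun x t => κ (sol.θ x t) * pdx sol.θ x t) x t) x :=
    (hκθ.mul hpθx.differentiableAt).hasDerivAt
  -- abbreviations
  set r := sol.ρ x t; set u := sol.u x t; set th := sol.θ x t
  set w0 := sol.w 0 x t; set w1 := sol.w 1 x t; set b0 := sol.b 0 x t; set b1 := sol.b 1 x t
  set rx := pdx sol.ρ x t; set ux := pdx sol.u x t; set thx := pdx sol.θ x t
  set w0x := pdx (sol.w 0) x t; set w1x := pdx (sol.w 1) x t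
  set b0x := pdx (sol.b 0) x t; set b1x := pdx (sol.b 1) x t
  set rt := pdt sol.ρ x t; set ut := pdt sol.u x t; set tht := pdt sol.θ x t
  set w0t := pdt (sol.w 0) x t; set w1t := pdt (sol.w 1) x t
  set b0t := pdt (sol.b 0) x t; set b1t := pdt (sol.b 1) x t
  set uxx := pdx (pdx sol.u) x t; set w0xx := pdx (pdx (sol.w 0)) x t
  set w1xx := pdx (pdx (sol.w 1)) x t; set b0xx := pdx (pdx (sol.b 0)) x t
  set b1xx := pdx (pdx (sol.b 1)) x t
  set K := pdx (fun x t => κ (sol.θ x t) * pdx sol.θ x t) x t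
  -- expansions of the PDE composite derivatives
  have h1 : pdx (fun x t => sol.ρ x t * sol.u x t) x t = rx * u + r * ux :=
    (hρx.mul hux).deriv.trans (by ring)
  have h2 : pdx (fun x t => sol.ρ x t * sol.u x t ^ 2 + sol.ρ x t * sol.θ x t
      + (sol.b 0 x t ^ 2 + sol.b 1 x t ^ 2) / 2) x t
      = rx * u ^ 2 + 2 * r * u * ux + rx * th + r * thx + b0 * b0x + b1 * b1x :=
    (((hρx.mul (hux.pow 2)).add (hρx.mul hθx)).add
      (((hb0x.pow 2).add (hb1x.pow 2)).div_const 2)).deriv.trans (by simp only [Pi.mul_apply, Pi.pow_apply, Pi.add_apply, Pi.sub_apply]; ring)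
  have h3w0 : pdx (fun x t => sol.ρ x t * sol.u x t * sol.w 0 x t - sol.b 0 x t) x t
      = rx * u * w0 + r * ux * w0 + r * u * w0x - b0x :=
    (((hρx.mul hux).mul hw0x).sub hb0x).deriv.trans (by simp only [Pi.mul_apply, Pi.pow_apply, Pi.add_apply, Pi.sub_apply]; ring)
  have h3w1 : pdx (fun x t => sol.ρ x t * sol.u x t * sol.w 1 x t - sol.b 1 x t) x t
      = rx * u * w1 + r * ux * w1 + r * u * w1x - b1x :=
    (((hρx.mul hux).mul hw1x).sub hb1x).deriv.trans (by simp only [Pi.mul_apply, Pi.pow_apply, Pi.add_apply, Pi.sub_apply]; ring)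
  have h4b0 : pdx (fun x t => sol.u x t * sol.b 0 x t - sol.w 0 x t) x t
      = ux * b0 + u * b0x - w0x :=
    ((hux.mul hb0x).sub hw0x).deriv.trans (by ring)
  have h4b1 : pdx (fun x t => sol.u x t * sol.b 1 x t - sol.w 1 x t) x t
      = ux * b1 + u * b1x - w1x :=
    ((hux.mul hb1x).sub hw1x).deriv.trans (by ring)
  have h5 : pdx (fun x t => sol.ρ x t * sol.u x t * sol.θ x t) x t
      = rx * u * th + r * ux * th + r * u * thx :=
    ((hρx.mul hux).mul hθx).deriv.trans (by simp only [Pi.mul_apply, Pi.pow_apply, Pi.add_apply, Pi.sub_apply]; ring)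
  have h7 : pdt (fun x t => sol.ρ x t * sol.u x t) x t = rt * u + r * ut :=
    (hρt.mul hut).deriv.trans (by ring)
  have h8w0 : pdt (fun x t => sol.ρ x t * sol.w 0 x t) x t = rt * w0 + r * w0t :=
    (hρt.mul hw0t).deriv.trans (by ring)
  have h8w1 : pdt (fun x t => sol.ρ x t * sol.w 1 x t) x t = rt * w1 + r * w1t :=
    (hρt.mul hw1t).deriv.trans (by ring)
  have h9 : pdt (fun x t => sol.ρ x t * sol.θ x t) x t = rt * th + r * tht :=
    (hρt.mul hθt).deriv.trans (by ring)
  -- expansions of energy and flux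
  have het : pdt (Efun sol) x t
      = (rt * u ^ 2 + 2 * r * u * ut) / 2
        + (rt * (w0 ^ 2 + w1 ^ 2) + 2 * r * (w0 * w0t + w1 * w1t)) / 2
        + (b0 * b0t + b1 * b1t) + (rt * th + r * tht) :=
    (((((hρt.mul (hut.pow 2)).div_const 2).add
        ((hρt.mul ((hw0t.pow 2).add (hw1t.pow 2))).div_const 2)).add
        (((hb0t.pow 2).add (hb1t.pow 2)).div_const 2)).add
        (hρt.mul hθt)).deriv.trans (by simp only [Pi.mul_apply, Pi.pow_apply, Pi.add_apply, Pi.sub_apply]; ring)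
  have hFx : pdx (Ffun κ sol) x t
      = (rx * u + r * ux) * (u ^ 2 / 2 + (w0 ^ 2 + w1 ^ 2) / 2 + th)
        + r * u * (u * ux + w0 * w0x + w1 * w1x + thx)
        + ux * (r * th) + u * (rx * th + r * thx)
        + ux * (b0 ^ 2 + b1 ^ 2) + u * (2 * b0 * b0x + 2 * b1 * b1x)
        - (w0x * b0 + w0 * b0x + w1x * b1 + w1 * b1x)
        - (ux * ux + u * uxx + w0x ^ 2 + w0 * w0xx + w1x ^ 2 + w1 * w1xx
            + b0x ^ 2 + b0 * b0xx + b1x ^ 2 + b1 * b1xx + K) :=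
    by
    have c1 := (hρx.mul hux).mul
      ((((hux.pow 2).div_const 2).add
        (((hw0x.pow 2).add (hw1x.pow 2)).div_const 2)).add hθx)
    have c2 := hux.mul (hρx.mul hθx)
    have c3 := hux.mul ((hb0x.pow 2).add (hb1x.pow 2))
    have c4 := (hw0x.mul hb0x).add (hw1x.mul hb1x)
    have c5 := (((((hux.mul hpux).add (hw0x.mul hpw0x)).add (hw1x.mul hpw1x)).add
      (hb0x.mul hpb0x)).add (hb1x.mul hpb1x)).add hKx
    exact ((((c1.add c2).add c3).sub c4).sub c5).deriv.trans (by simp only [Pi.mul_apply, Pi.pow_apply, Pi.add_apply, Pi.sub_apply]; ring)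
  -- the PDEs
  have hmass := sol.eq_mass x hx t ht
  have hmom := sol.eq_mom x hx t ht
  have hweq0 := sol.eq_w 0 x hx t ht
  have hweq1 := sol.eq_w 1 x hx t ht
  have hbeq0 := sol.eq_b 0 x hx t ht
  have hbeq1 := sol.eq_b 1 x hx t ht
  have hθeq := sol.eq_θ x hx t ht
  simp only [Fin.sum_univ_two] at hmom hθeq
  rw [h1] at hmass
  rw [h7, h2] at hmom
  rw [h8w0, h3w0] at hweq0
  rw [h8w1, h3w1] at hweq1
  rw [h4b0] at hbeq0
  rw [h4b1] at hbeq1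
  rw [h9, h5] at hθeq
  rw [het, hFx]
  linear_combination u * hmom + w0 * hweq0 + w1 * hweq1 + b0 * hbeq0 + b1 * hbeq1 + hθeq
    - (u ^ 2 / 2 + (w0 ^ 2 + w1 ^ 2) / 2) * hmass

theorem integral_conserved {T : ℝ} (e : ℝ → ℝ → ℝ)
    (he : Continuous (Function.uncurry e))
    (het : Continuous (Function.uncurry (pdt e)))
    (heD : ∀ x s, HasDerivAt (fun s' => e x s') (pdt e x s) s)
    (hflux : ∀ s ∈ Set.Icc (0:ℝ) T, (∫ x in (0:ℝ)..1, pdt e x s) = 0)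
    (t : ℝ) (ht : t ∈ Set.Icc (0:ℝ) T) :
    (∫ x in (0:ℝ)..1, e x t) = ∫ x in (0:ℝ)..1, e x 0 := by
  have h01 : (0:ℝ) ≤ 1 := zero_le_one
  have hcont_t : ∀ s, Continuous fun x => e x s := fun s =>
    he.comp (continuous_id.prodMk continuous_const)
  have hsub : (∫ x in (0:ℝ)..1, e x t) - (∫ x in (0:ℝ)..1, e x 0)
      = ∫ x in (0:ℝ)..1, (e x t - e x 0) := by
    rw [intervalIntegral.integral_sub ((hcont_t t).intervalIntegrable 0 1)
      ((hcont_t 0).intervalIntegrable 0 1)]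
  have hFTC : ∀ x : ℝ, e x t - e x 0 = ∫ s in (0:ℝ)..t, pdt e x s := by
    intro x
    have := intervalIntegral.integral_eq_sub_of_hasDerivAt
      (f := fun s => e x s) (f' := fun s => pdt e x s) (a := 0) (b := t)
      (fun s _ => heD x s)
      ((het.comp (continuous_const.prodMk continuous_id)).intervalIntegrable 0 t)
    linarith [this]
  have hswap : (∫ x in (0:ℝ)..1, ∫ s in (0:ℝ)..t, pdt e x s)
      = ∫ s in (0:ℝ)..t, ∫ x in (0:ℝ)..1, pdt e x s := by
    have hint : Integrable (Function.uncurry (pdt e))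
        ((volume.restrict (Set.Ioc (0:ℝ) 1)).prod (volume.restrict (Set.Ioc (0:ℝ) t))) := by
      rw [Measure.prod_restrict]
      refine ((het.continuousOn).integrableOn_compact
        (isCompact_Icc.prod isCompact_Icc)).mono_set
        (Set.prod_mono Set.Ioc_subset_Icc_self Set.Ioc_subset_Icc_self)
    simp only [intervalIntegral.integral_of_le h01, intervalIntegral.integral_of_le ht.1]
    exact MeasureTheory.integral_integral_swap hint
  calc (∫ x in (0:ℝ)..1, e x t)
      = (∫ x in (0:ℝ)..1, e x 0) + ∫ x in (0:ℝ)..1, (e x t - e x 0) := by linarith [hsub]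
    _ = (∫ x in (0:ℝ)..1, e x 0) := by
        rw [show (∫ x in (0:ℝ)..1, (e x t - e x 0))
            = ∫ x in (0:ℝ)..1, ∫ s in (0:ℝ)..t, pdt e x s from
          intervalIntegral.integral_congr (fun x _ => hFTC x), hswap]
        rw [intervalIntegral.integral_congr (g := fun _ => (0:ℝ))
          (fun s hs => hflux s ⟨(Set.uIcc_of_le ht.1 ▸ hs).1,
            le_trans (Set.uIcc_of_le ht.1 ▸ hs).2 ht.2⟩)]
        simp

theorem flux_integral_zero {e F : ℝ → ℝ → ℝ} {s : ℝ}
    (hident : ∀ x ∈ Set.Icc (0:ℝ) 1, pdt e x s = - pdx F x s)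
    (hFD : ∀ x ∈ Set.Icc (0:ℝ) 1, HasDerivAt (fun y => F y s) (pdx F x s) x)
    (hcont : Continuous fun x => pdt e x s)
    (hbc0 : F 0 s = 0) (hbc1 : F 1 s = 0) :
    (∫ x in (0:ℝ)..1, pdt e x s) = 0 := by
  have hsub : Set.uIoc (0:ℝ) 1 ⊆ Set.Icc (0:ℝ) 1 := by
    rw [Set.uIoc_of_le zero_le_one]; exact Set.Ioc_subset_Icc_self
  have hii : IntervalIntegrable (fun x => pdx F x s) volume 0 1 := by
    refine ((hcont.neg).intervalIntegrable 0 1).congr_ae ?_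
    exact ((ae_restrict_mem measurableSet_uIoc).mono fun x hx => by
      have := hident x (hsub hx); simp [this])
  have hFTC := intervalIntegral.integral_eq_sub_of_hasDerivAt
    (f := fun y => F y s) (f' := fun x => pdx F x s) (a := 0) (b := 1)
    (fun x hx => hFD x (by rwa [Set.uIcc_of_le zero_le_one] at hx)) hii
  have h2 : (∫ x in (0:ℝ)..1, pdt e x s) = ∫ x in (0:ℝ)..1, - pdx F x s :=
    intervalIntegral.integral_congr fun x hx =>
      hident x (by rwa [Set.uIcc_of_le zero_le_one] at hx)
  rw [h2, intervalIntegral.integral_neg, hFTC]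
  rw [hbc0, hbc1]
  ring

theorem Efun_smooth {T : ℝ} {κ : ℝ → ℝ} (sol : MHDSol T κ) :
    ContDiff ℝ (⊤ : ℕ∞) (Function.uncurry (Efun sol)) := by
  have hρ : ContDiff ℝ (⊤ : ℕ∞) (fun p : ℝ × ℝ => sol.ρ p.1 p.2) := sol.smooth_ρ
  have hu : ContDiff ℝ (⊤ : ℕ∞) (fun p : ℝ × ℝ => sol.u p.1 p.2) := sol.smooth_u
  have hθ : ContDiff ℝ (⊤ : ℕ∞) (fun p : ℝ × ℝ => sol.θ p.1 p.2) := sol.smooth_θ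
  have hw0 : ContDiff ℝ (⊤ : ℕ∞) (fun p : ℝ × ℝ => sol.w 0 p.1 p.2) := sol.smooth_w 0
  have hw1 : ContDiff ℝ (⊤ : ℕ∞) (fun p : ℝ × ℝ => sol.w 1 p.1 p.2) := sol.smooth_w 1
  have hb0 : ContDiff ℝ (⊤ : ℕ∞) (fun p : ℝ × ℝ => sol.b 0 p.1 p.2) := sol.smooth_b 0
  have hb1 : ContDiff ℝ (⊤ : ℕ∞) (fun p : ℝ × ℝ => sol.b 1 p.1 p.2) := sol.smooth_b 1
  exact ((((hρ.mul (hu.pow 2)).div_const 2).add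
    ((hρ.mul ((hw0.pow 2).add (hw1.pow 2))).div_const 2)).add
    (((hb0.pow 2).add (hb1.pow 2)).div_const 2)).add (hρ.mul hθ)

theorem Ffun_slice_hasDerivAt {T : ℝ} {κ : ℝ → ℝ} (hκ : ContDiffOn ℝ 2 κ (Set.Ici 0))
    (sol : MHDSol T κ) {x s : ℝ} (hx : x ∈ Set.Icc (0:ℝ) 1) (hs : s ∈ Set.Icc (0:ℝ) T) :
    HasDerivAt (fun y => Ffun κ sol y s) (pdx (Ffun κ sol) x s) x := by
  have hθpos : 0 < sol.θ x s := sol.θ_pos x hx s hs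
  have hκθ : DifferentiableAt ℝ (fun y => κ (sol.θ y s)) x := by
    have h1 : DifferentiableAt ℝ κ (sol.θ x s) :=
      (hκ.contDiffAt (Ici_mem_nhds hθpos)).differentiableAt (by norm_num)
    exact h1.comp x (diffAt_x sol.smooth_θ x s)
  have dρ := diffAt_x sol.smooth_ρ x s
  have du := diffAt_x sol.smooth_u x s
  have dθ := diffAt_x sol.smooth_θ x s
  have dw0 := diffAt_x (sol.smooth_w 0) x s
  have dw1 := diffAt_x (sol.smooth_w 1) x s
  have db0 := diffAt_x (sol.smooth_b 0) x s
  have db1 := diffAt_x (sol.smooth_b 1) x s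
  have dpu := diffAt_x (pdx_smooth sol.smooth_u) x s
  have dpθ := diffAt_x (pdx_smooth sol.smooth_θ) x s
  have dpw0 := diffAt_x (pdx_smooth (sol.smooth_w 0)) x s
  have dpw1 := diffAt_x (pdx_smooth (sol.smooth_w 1)) x s
  have dpb0 := diffAt_x (pdx_smooth (sol.smooth_b 0)) x s
  have dpb1 := diffAt_x (pdx_smooth (sol.smooth_b 1)) x s
  have : DifferentiableAt ℝ (fun y => Ffun κ sol y s) x := by
    unfold Ffun
    exact (((((dρ.mul du).mul ((((du.pow 2).div_const 2).add
      (((dw0.pow 2).add (dw1.pow 2)).div_const 2)).add dθ)).add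
      (du.mul (dρ.mul dθ))).add
      (du.mul ((db0.pow 2).add (db1.pow 2)))).sub
      ((dw0.mul db0).add (dw1.mul db1))).sub
      ((((((du.mul dpu).add (dw0.mul dpw0)).add (dw1.mul dpw1)).add
        (db0.mul dpb0)).add (db1.mul dpb1)).add (hκθ.mul dpθ))
  exact this.hasDerivAt

theorem Ffun_bc {T : ℝ} {κ : ℝ → ℝ} (sol : MHDSol T κ) {s : ℝ}
    (hs : s ∈ Set.Icc (0:ℝ) T) : Ffun κ sol 0 s = 0 ∧ Ffun κ sol 1 s = 0 := by
  have hu := sol.bc_u s hs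
  have hw0 := sol.bc_w 0 s hs
  have hw1 := sol.bc_w 1 s hs
  have hb0 := sol.bc_b 0 s hs
  have hb1 := sol.bc_b 1 s hs
  have hθ := sol.bc_θ s hs
  constructor
  · unfold Ffun
    rw [hu.1, hw0.1, hw1.1, hb0.1, hb1.1, hθ.1]; ring
  · unfold Ffun
    rw [hu.2, hw0.2, hw1.2, hb0.2, hb1.2, hθ.2]; ring

theorem energy_conserved {T : ℝ} {κ : ℝ → ℝ} (hκ : ContDiffOn ℝ 2 κ (Set.Ici 0))
    (sol : MHDSol T κ) {t : ℝ} (ht : t ∈ Set.Icc (0:ℝ) T) :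
    (∫ x in (0:ℝ)..1, Efun sol x t) = ∫ x in (0:ℝ)..1, Efun sol x 0 := by
  have hE := Efun_smooth sol
  refine integral_conserved (Efun sol) hE.continuous (pdt_smooth hE).continuous
    (fun x s => hasDerivAt_pdt hE x s) (fun s hs => ?_) t ht
  refine flux_integral_zero (F := Ffun κ sol) (fun x hx => ?_)
    (fun x hx => Ffun_slice_hasDerivAt hκ sol hx hs)
    ((pdt_smooth hE).continuous.comp (continuous_id.prodMk continuous_const))
    (Ffun_bc sol hs).1 (Ffun_bc sol hs).2
  have := energy_identity hκ sol hx hs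
  linarith

theorem mass_conserved {T : ℝ} {κ : ℝ → ℝ} (sol : MHDSol T κ) {t : ℝ}
    (ht : t ∈ Set.Icc (0:ℝ) T) :
    (∫ x in (0:ℝ)..1, sol.ρ x t) = ∫ x in (0:ℝ)..1, sol.ρ x 0 := by
  refine integral_conserved sol.ρ sol.smooth_ρ.continuous
    (pdt_smooth sol.smooth_ρ).continuous
    (fun x s => hasDerivAt_pdt sol.smooth_ρ x s) (fun s hs => ?_) t ht
  refine flux_integral_zero (F := fun x t => sol.ρ x t * sol.u x t) (fun x hx => ?_)
    (fun x hx => ((diffAt_x sol.smooth_ρ x s).mul (diffAt_x sol.smooth_u x s)).hasDerivAt)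
    ((pdt_smooth sol.smooth_ρ).continuous.comp (continuous_id.prodMk continuous_const))
    (by simp [(sol.bc_u s hs).1]) (by simp [(sol.bc_u s hs).2])
  have := sol.eq_mass x hx s hs
  linarith

theorem abs_ival {h : ℝ → ℝ} {a b : ℝ} (ha : a ∈ Set.Icc (0:ℝ) 1) (hb : b ∈ Set.Icc (0:ℝ) 1)
    (hc : ContinuousOn h (Set.Icc 0 1)) :
    |∫ y in a..b, h y| ≤ ∫ y in (0:ℝ)..1, |h y| := by
  have hint : IntervalIntegrable (fun y => |h y|) volume 0 1 :=
    ContinuousOn.intervalIntegrable (by rw [Set.uIcc_of_le zero_le_one]; exact hc.abs)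
  have key : ∀ c d : ℝ, c ∈ Set.Icc (0:ℝ) 1 → d ∈ Set.Icc (0:ℝ) 1 → c ≤ d →
      |∫ y in c..d, h y| ≤ ∫ y in (0:ℝ)..1, |h y| := by
    intro c d hcm hdm hcd
    calc |∫ y in c..d, h y| ≤ ∫ y in c..d, |h y| :=
          intervalIntegral.abs_integral_le_integral_abs hcd
      _ ≤ ∫ y in (0:ℝ)..1, |h y| :=
          intervalIntegral.integral_mono_interval hcm.1 hcd hdm.2
            (Filter.Eventually.of_forall fun y => abs_nonneg _) hint
  rcases le_total a b with hab | hba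
  · exact key a b ha hb hab
  · rw [intervalIntegral.integral_symm, abs_neg]
    exact key b a hb ha hba

theorem slice_deriv (f : ℝ → ℝ → ℝ) (t : ℝ) :
    deriv (fun x => f x t) = fun x => pdx f x t := funext fun _ => rfl

/-- Extraction of `L²` bounds from an `H²` bound. -/
theorem H2_extract {f : ℝ → ℝ → ℝ} (hf : ContDiff ℝ (⊤ : ℕ∞) (Function.uncurry f)) (t A : ℝ)
    (hA : H2norm (fun x => f x t) ≤ A) :
    (∫ x in (0:ℝ)..1, (f x t) ^ 2) ≤ A ^ 2 ∧
    (∫ x in (0:ℝ)..1, ((f x t) ^ 2 + (pdx f x t) ^ 2)) ≤ A ^ 2 := by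
  have hg : Continuous fun x => f x t := (slicex_contDiff hf t).continuous
  have hg' : Continuous fun x => pdx f x t :=
    (slicex_contDiff (pdx_smooth hf) t).continuous
  have hg'' : Continuous fun x => pdx (pdx f) x t :=
    (slicex_contDiff (pdx_smooth (pdx_smooth hf)) t).continuous
  set I3 := ∫ x in (0:ℝ)..1, ((f x t) ^ 2 + (pdx f x t) ^ 2 + (pdx (pdx f) x t) ^ 2) with hI3
  have hIA : I3 ≤ A ^ 2 := by
    have h1 : Real.sqrt I3 ≤ A := by
      have : H2norm (fun x => f x t) = Real.sqrt I3 := by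
        unfold H2norm
        rw [slice_deriv f t, show deriv (fun x => pdx f x t) = fun x => pdx (pdx f) x t from
          slice_deriv (pdx f) t]
      rwa [this] at hA
    have hInn : (0:ℝ) ≤ I3 :=
      intervalIntegral.integral_nonneg zero_le_one fun u _ => by positivity
    nlinarith [Real.sq_sqrt hInn, Real.sqrt_nonneg I3]
  have hsplit : I3 = (∫ x in (0:ℝ)..1, ((f x t) ^ 2 + (pdx f x t) ^ 2))
      + ∫ x in (0:ℝ)..1, (pdx (pdx f) x t) ^ 2 := by
    rw [hI3]
    exact intervalIntegral.integral_add
      (((hg.pow 2).add (hg'.pow 2)).intervalIntegrable 0 1)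
      ((hg''.pow 2).intervalIntegrable 0 1)
  have hsplit2 : (∫ x in (0:ℝ)..1, ((f x t) ^ 2 + (pdx f x t) ^ 2))
      = (∫ x in (0:ℝ)..1, (f x t) ^ 2) + ∫ x in (0:ℝ)..1, (pdx f x t) ^ 2 :=
    intervalIntegral.integral_add ((hg.pow 2).intervalIntegrable 0 1)
      ((hg'.pow 2).intervalIntegrable 0 1)
  have h3 : 0 ≤ ∫ x in (0:ℝ)..1, (pdx (pdx f) x t) ^ 2 :=
    intervalIntegral.integral_nonneg zero_le_one fun u _ => by positivity
  have h2 : 0 ≤ ∫ x in (0:ℝ)..1, (pdx f x t) ^ 2 :=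
    intervalIntegral.integral_nonneg zero_le_one fun u _ => by positivity
  constructor <;> linarith

/-- Pointwise square bound from the `H²` bound. -/
theorem sup_sq_bound {f : ℝ → ℝ → ℝ} (hf : ContDiff ℝ (⊤ : ℕ∞) (Function.uncurry f)) (t A : ℝ)
    (hA : H2norm (fun x => f x t) ≤ A) :
    ∀ x ∈ Set.Icc (0:ℝ) 1, (f x t) ^ 2 ≤ 2 * A ^ 2 := by
  intro x hx
  obtain ⟨hL2, hH1⟩ := H2_extract hf t A hA
  have hg : Continuous fun x => f x t := (slicex_contDiff hf t).continuous
  have hg' : Continuous fun x => pdx f x t :=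
    (slicex_contDiff (pdx_smooth hf) t).continuous
  -- minimum point of the square
  obtain ⟨y₀, hy₀m, hy₀⟩ := isCompact_Icc.exists_isMinOn (f := fun y => (f y t) ^ 2)
    (Set.nonempty_Icc.mpr zero_le_one) ((hg.pow 2).continuousOn)
  -- the min value is below the average
  have hmin : (f y₀ t) ^ 2 ≤ ∫ y in (0:ℝ)..1, (f y t) ^ 2 := by
    have : (∫ _ in (0:ℝ)..1, (f y₀ t) ^ 2) ≤ ∫ y in (0:ℝ)..1, (f y t) ^ 2 :=
      intervalIntegral.integral_mono_on zero_le_one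
        (intervalIntegrable_const) ((hg.pow 2).intervalIntegrable 0 1)
        (fun y hy => hy₀ hy)
    simpa using this
  -- FTC for the square
  have hFTC : (f x t) ^ 2 - (f y₀ t) ^ 2 = ∫ y in y₀..x, 2 * f y t * pdx f y t := by
    rw [intervalIntegral.integral_eq_sub_of_hasDerivAt
      (f := fun y => (f y t) ^ 2) (f' := fun y => 2 * f y t * pdx f y t) (fun y _ => by
        simpa using (hasDerivAt_pdx hf y t).fun_pow 2)
      (((continuous_const.mul hg).mul hg').intervalIntegrable y₀ x)]
  have habs : |∫ y in y₀..x, 2 * f y t * pdx f y t|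
      ≤ ∫ y in (0:ℝ)..1, |2 * f y t * pdx f y t| :=
    abs_ival hy₀m hx (((continuous_const.mul hg).mul hg').continuousOn)
  have hptw : (∫ y in (0:ℝ)..1, |2 * f y t * pdx f y t|)
      ≤ ∫ y in (0:ℝ)..1, ((f y t) ^ 2 + (pdx f y t) ^ 2) :=
    intervalIntegral.integral_mono_on zero_le_one
      ((((continuous_const.mul hg).mul hg').abs).intervalIntegrable 0 1)
      (((hg.pow 2).add (hg'.pow 2)).intervalIntegrable 0 1)
      (fun y _ => by
        rw [abs_mul, abs_mul]
        nlinarith [sq_nonneg (|f y t| - |pdx f y t|), abs_nonneg (f y t),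
          abs_nonneg (pdx f y t), sq_abs (f y t), sq_abs (pdx f y t), abs_two (α := ℝ)])
  have := abs_le.mp (habs)
  nlinarith [hFTC, hmin, hL2, hH1]

theorem amgm_aux {a lam : ℝ} (h : 0 < lam) (ha : 0 ≤ a) : a ≤ lam / 2 + a ^ 2 / (2 * lam) := by
  rw [div_add_div _ _ two_ne_zero (by positivity), le_div_iff₀ (by positivity)]
  nlinarith [sq_nonneg (a - lam)]

set_option maxHeartbeats 1000000 in
/-- estimate (2.19): there is a constant `C` depending only on
`T, q, C₀` and on the initial data (upper bound `A` for the `H²` norms, upper bound `B`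
for `∫₀¹ ρ₀(|ln ρ₀| + |ln θ₀|) dx`, positive lower bound `M` for `∫₀¹ ρ₀ dx`), but not
on the pointwise lower bounds of `ρ₀` and `θ₀`, such that every smooth solution
satisfies, for every `t ∈ [0,T]`,
`(sup_{x∈[0,1]} θ(x,t))^{q+1} ≤ C (1 + ‖κ(θ)θ_x(·,t)‖_{L²(0,1)})`. -/
theorem stmt13 (T q C₀ : ℝ) (hT : 0 < T) (hq : 0 < q) (hC₀ : 1 ≤ C₀)
    (κ : ℝ → ℝ) (hκ : KappaHyp q C₀ κ) (A B M : ℝ) (hM : 0 < M) :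
    ∃ C : ℝ, 0 < C ∧ ∀ sol : MHDSol T κ, InitBounds sol A B M →
      ∀ t ∈ Set.Icc (0:ℝ) T,
        (sSup ((fun x => sol.θ x t) '' Set.Icc (0:ℝ) 1)) ^ (q + 1)
          ≤ C * (1 + Real.sqrt (∫ x in (0:ℝ)..1,
              (κ (sol.θ x t)) ^ 2 * (pdx sol.θ x t) ^ 2)) := by
  obtain ⟨hκC2, hκlow, hκhigh⟩ := hκ
  obtain ⟨EB, hEB⟩ : ∃ EB : ℝ, EB = (1 + 8 * A ^ 2) * (1 + A ^ 2) / 4 + A ^ 2 := ⟨_, rfl⟩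
  obtain ⟨C, hC⟩ : ∃ C : ℝ, C = (max 1 (EB / M)) ^ (q + 1) + (q + 1) * C₀ := ⟨_, rfl⟩
  have hq1 : (0:ℝ) < q + 1 := by linarith
  have hCbase : (1:ℝ) ≤ max 1 (EB / M) := le_max_left _ _
  have hrpow1 : (1:ℝ) ≤ (max 1 (EB / M)) ^ (q + 1) := by
    calc (1:ℝ) = 1 ^ (q+1) := (Real.one_rpow _).symm
    _ ≤ (max 1 (EB / M)) ^ (q + 1) := Real.rpow_le_rpow zero_le_one hCbase hq1.le
  have hCpos : 0 < C := by
    have : 0 < (q + 1) * C₀ := by nlinarith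
    rw [hC]; linarith
  refine ⟨C, hCpos, ?_⟩
  intro sol hInit t ht
  obtain ⟨hρA, huA, hθA, hwA, hbA, _hlogB, hMass⟩ := hInit
  have hA0 : 0 ≤ A := le_trans (Real.sqrt_nonneg _) hρA
  have h01 : (0:ℝ) ≤ 1 := zero_le_one
  -- continuity of slices at time t and 0
  have hρc : ∀ s, Continuous fun x => sol.ρ x s := fun s => (slicex_contDiff sol.smooth_ρ s).continuous
  have hθc : ∀ s, Continuous fun x => sol.θ x s := fun s => (slicex_contDiff sol.smooth_θ s).continuous
  have hθxc : ∀ s, Continuous fun x => pdx sol.θ x s := fun s =>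
    (slicex_contDiff (pdx_smooth sol.smooth_θ) s).continuous
  have hEc : ∀ s, Continuous fun x => Efun sol x s := fun s =>
    (slicex_contDiff (Efun_smooth sol) s).continuous
  -- step B : initial energy bound
  have hbc : ∀ i, Continuous fun x => sol.b i x 0 := fun i =>
    (slicex_contDiff (sol.smooth_b i) 0).continuous
  have hE0 : (∫ x in (0:ℝ)..1, Efun sol x 0) ≤ EB := by
    have h0T : (0:ℝ) ∈ Set.Icc 0 T := ⟨le_refl 0, hT.le⟩
    have hSu := sup_sq_bound sol.smooth_u 0 A huA
    have hSw0 := sup_sq_bound (sol.smooth_w 0) 0 A (hwA 0)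
    have hSw1 := sup_sq_bound (sol.smooth_w 1) 0 A (hwA 1)
    have hSθ := sup_sq_bound sol.smooth_θ 0 A hθA
    have hρ2 := (H2_extract sol.smooth_ρ 0 A hρA).1
    have hb02 := (H2_extract (sol.smooth_b 0) 0 A (hbA 0)).1
    have hb12 := (H2_extract (sol.smooth_b 1) 0 A (hbA 1)).1
    have hρint : (∫ x in (0:ℝ)..1, sol.ρ x 0) ≤ (1 + A ^ 2) / 2 := by
      have hmono := intervalIntegral.integral_mono_on (μ := volume) (g := fun y => (1 + sol.ρ y 0 ^ 2) / 2) h01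
        ((hρc 0).intervalIntegrable 0 1)
        ((((continuous_const.add ((hρc 0).pow 2))).div_const 2).intervalIntegrable 0 1)
        (fun y _ => by nlinarith [sq_nonneg (sol.ρ y 0 - 1)] :
          ∀ y ∈ Set.Icc (0:ℝ) 1, sol.ρ y 0 ≤ (1 + sol.ρ y 0 ^ 2) / 2)
      have hcomp : (∫ y in (0:ℝ)..1, (1 + sol.ρ y 0 ^ 2) / 2)
          = ((∫ y in (0:ℝ)..1, (1:ℝ)) + ∫ y in (0:ℝ)..1, sol.ρ y 0 ^ 2) / 2 := by
        rw [intervalIntegral.integral_div, intervalIntegral.integral_add (f := fun _ => (1:ℝ))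
            (g := fun y => sol.ρ y 0 ^ 2)
          intervalIntegrable_const (((hρc 0).pow 2).intervalIntegrable 0 1)]
      simp only [intervalIntegral.integral_const, smul_eq_mul, sub_zero, mul_one] at hcomp
      rw [hcomp] at hmono
      linarith
    have hpoint : ∀ y ∈ Set.Icc (0:ℝ) 1, Efun sol y 0
        ≤ sol.ρ y 0 * ((1 + 8 * A ^ 2) / 2)
          + (sol.b 0 y 0 ^ 2 + sol.b 1 y 0 ^ 2) / 2 := by
      intro y hy
      have hρ0 := (sol.ρ_pos y hy 0 h0T).le
      have h1 : sol.ρ y 0 * sol.u y 0 ^ 2 ≤ sol.ρ y 0 * (2 * A ^ 2) :=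
        mul_le_mul_of_nonneg_left (hSu y hy) hρ0
      have h2 : sol.ρ y 0 * (sol.w 0 y 0 ^ 2 + sol.w 1 y 0 ^ 2)
          ≤ sol.ρ y 0 * (4 * A ^ 2) :=
        mul_le_mul_of_nonneg_left (by linarith [hSw0 y hy, hSw1 y hy]) hρ0
      have hθle : sol.θ y 0 ≤ (1 + 2 * A ^ 2) / 2 := by
        nlinarith [sq_nonneg (sol.θ y 0 - 1), hSθ y hy]
      have h3 : sol.ρ y 0 * sol.θ y 0 ≤ sol.ρ y 0 * ((1 + 2 * A ^ 2) / 2) :=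
        mul_le_mul_of_nonneg_left hθle hρ0
      unfold Efun
      linarith
    have hEint := intervalIntegral.integral_mono_on (μ := volume)
        (g := fun y => sol.ρ y 0 * ((1 + 8 * A ^ 2) / 2) + (sol.b 0 y 0 ^ 2 + sol.b 1 y 0 ^ 2) / 2) h01
      ((hEc 0).intervalIntegrable 0 1)
      ((((hρc 0).mul continuous_const).add
        ((((hbc 0).pow 2).add ((hbc 1).pow 2)).div_const 2)).intervalIntegrable 0 1)
      hpoint
    have hcomp2 : (∫ y in (0:ℝ)..1, (sol.ρ y 0 * ((1 + 8 * A ^ 2) / 2)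
        + (sol.b 0 y 0 ^ 2 + sol.b 1 y 0 ^ 2) / 2))
        = (∫ y in (0:ℝ)..1, sol.ρ y 0) * ((1 + 8 * A ^ 2) / 2)
          + ((∫ y in (0:ℝ)..1, sol.b 0 y 0 ^ 2) + ∫ y in (0:ℝ)..1, sol.b 1 y 0 ^ 2) / 2 := by
      rw [intervalIntegral.integral_add (f := fun y => sol.ρ y 0 * ((1 + 8 * A ^ 2) / 2))
          (g := fun y => (sol.b 0 y 0 ^ 2 + sol.b 1 y 0 ^ 2) / 2)
          (((hρc 0).mul continuous_const).intervalIntegrable 0 1)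
        (((((hbc 0).pow 2).add ((hbc 1).pow 2)).div_const 2).intervalIntegrable 0 1),
        intervalIntegral.integral_mul_const, intervalIntegral.integral_div,
        intervalIntegral.integral_add (f := fun y => sol.b 0 y 0 ^ 2) (g := fun y => sol.b 1 y 0 ^ 2)
            (((hbc 0).pow 2).intervalIntegrable 0 1)
          (((hbc 1).pow 2).intervalIntegrable 0 1)]
    rw [hcomp2] at hEint
    have hfin2 : (∫ y in (0:ℝ)..1, sol.ρ y 0) * ((1 + 8 * A ^ 2) / 2)
        ≤ (1 + A ^ 2) / 2 * ((1 + 8 * A ^ 2) / 2) :=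
      mul_le_mul_of_nonneg_right hρint (by positivity)
    rw [hEB]
    nlinarith [hb02, hb12]
  -- step C : bounds at time t
  have hmass_t : M ≤ ∫ x in (0:ℝ)..1, sol.ρ x t := by
    rw [mass_conserved sol ht]; exact hMass
  have hE_t : (∫ x in (0:ℝ)..1, Efun sol x t) ≤ EB := by
    rw [energy_conserved hκC2 sol ht]; exact hE0
  have hρθ_t : (∫ x in (0:ℝ)..1, sol.ρ x t * sol.θ x t) ≤ ∫ x in (0:ℝ)..1, Efun sol x t := by
    refine intervalIntegral.integral_mono_on h01
      (((hρc t).mul (hθc t)).intervalIntegrable 0 1) ((hEc t).intervalIntegrable 0 1) ?_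
    intro y hy
    have hρpos := sol.ρ_pos y hy t ht
    unfold Efun
    nlinarith [sq_nonneg (sol.u y t), sq_nonneg (sol.w 0 y t), sq_nonneg (sol.w 1 y t),
      sq_nonneg (sol.b 0 y t), sq_nonneg (sol.b 1 y t)]
  -- step D : minimum of θ
  obtain ⟨y₀, hy₀m, hy₀⟩ := isCompact_Icc.exists_isMinOn (f := fun y => sol.θ y t)
    (Set.nonempty_Icc.mpr h01) ((hθc t).continuousOn)
  have hθy₀pos : 0 < sol.θ y₀ t := sol.θ_pos y₀ hy₀m t ht
  have hmin_le : sol.θ y₀ t ≤ EB / M := by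
    have h1 : (∫ x in (0:ℝ)..1, sol.ρ x t * sol.θ y₀ t)
        ≤ ∫ x in (0:ℝ)..1, sol.ρ x t * sol.θ x t := by
      refine intervalIntegral.integral_mono_on h01
        (((hρc t).mul continuous_const).intervalIntegrable 0 1)
        (((hρc t).mul (hθc t)).intervalIntegrable 0 1) ?_
      intro y hy
      exact mul_le_mul_of_nonneg_left (hy₀ hy) (sol.ρ_pos y hy t ht).le
    rw [intervalIntegral.integral_mul_const] at h1
    have h2 : M * sol.θ y₀ t ≤ EB := by
      calc M * sol.θ y₀ t ≤ (∫ x in (0:ℝ)..1, sol.ρ x t) * sol.θ y₀ t :=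
            mul_le_mul_of_nonneg_right hmass_t hθy₀pos.le
        _ ≤ EB := by linarith
    rw [le_div_iff₀ hM]; linarith
  -- step E : the quantity J
  obtain ⟨J, hJ⟩ : ∃ J : ℝ, J = ∫ x in (0:ℝ)..1, (κ (sol.θ x t)) ^ 2 * (pdx sol.θ x t) ^ 2 :=
    ⟨_, rfl⟩
  have hκθcont : ContinuousOn (fun x => κ (sol.θ x t)) (Set.Icc 0 1) := by
    refine hκC2.continuousOn.comp (hθc t).continuousOn ?_
    exact fun y hy => (sol.θ_pos y hy t ht).le
  have hJcont : ContinuousOn (fun x => (κ (sol.θ x t)) ^ 2 * (pdx sol.θ x t) ^ 2)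
      (Set.Icc 0 1) := (hκθcont.pow 2).mul ((hθxc t).continuousOn.pow 2)
  have hJint : IntervalIntegrable (fun x => (κ (sol.θ x t)) ^ 2 * (pdx sol.θ x t) ^ 2)
      volume 0 1 :=
    ContinuousOn.intervalIntegrable (by rw [Set.uIcc_of_le h01]; exact hJcont)
  have hJ0 : 0 ≤ J := by
    rw [hJ]
    exact intervalIntegral.integral_nonneg h01 fun y _ => by positivity
  obtain ⟨lam, hlam⟩ : ∃ lam : ℝ, lam = max 1 (Real.sqrt J) := ⟨_, rfl⟩
  have hlam1 : (1:ℝ) ≤ lam := hlam ▸ le_max_left _ _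
  have hlampos : (0:ℝ) < lam := lt_of_lt_of_le one_pos hlam1
  have hsqJ : Real.sqrt J ≤ lam := hlam ▸ le_max_right _ _
  have hJlam : J ≤ lam ^ 2 := by
    nlinarith [Real.sq_sqrt hJ0, Real.sqrt_nonneg J]
  -- step F : pointwise bound on the integrand
  have hC₀pos : (0:ℝ) < C₀ := lt_of_lt_of_le one_pos hC₀
  have hptw : ∀ y ∈ Set.Icc (0:ℝ) 1,
      |(q + 1) * sol.θ y t ^ q * pdx sol.θ y t|
        ≤ (q + 1) * C₀ * lam / 2
          + ((q + 1) * C₀ / (2 * lam)) * ((κ (sol.θ y t)) ^ 2 * (pdx sol.θ y t) ^ 2) := by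
    intro y hy
    have hθpos := sol.θ_pos y hy t ht
    have hθq : (0:ℝ) < sol.θ y t ^ q := Real.rpow_pos_of_pos hθpos q
    have hκl := hκlow (sol.θ y t) hθpos.le
    have hκpos : 0 < κ (sol.θ y t) := by
      have : 0 < C₀⁻¹ * (1 + sol.θ y t ^ q) := by positivity
      linarith
    have hθqκ : sol.θ y t ^ q ≤ C₀ * κ (sol.θ y t) := by
      have h2 : C₀⁻¹ * (1 + sol.θ y t ^ q) ≤ κ (sol.θ y t) := hκl
      have h3 : 1 + sol.θ y t ^ q ≤ C₀ * κ (sol.θ y t) := by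
        rw [inv_mul_le_iff₀ hC₀pos] at h2; linarith
      linarith
    have habs : |(q + 1) * sol.θ y t ^ q * pdx sol.θ y t|
        = (q + 1) * sol.θ y t ^ q * |pdx sol.θ y t| := by
      rw [abs_mul, abs_of_nonneg (by positivity : (0:ℝ) ≤ (q+1) * sol.θ y t ^ q)]
    rw [habs]
    have hkey : κ (sol.θ y t) * |pdx sol.θ y t|
        ≤ lam / 2 + ((κ (sol.θ y t)) ^ 2 * (pdx sol.θ y t) ^ 2) / (2 * lam) := by
      have h := amgm_aux (a := κ (sol.θ y t) * |pdx sol.θ y t|) hlampos (by positivity)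
      rwa [mul_pow, sq_abs] at h
    calc (q + 1) * sol.θ y t ^ q * |pdx sol.θ y t|
        ≤ (q + 1) * (C₀ * κ (sol.θ y t)) * |pdx sol.θ y t| := by
          have h := mul_le_mul_of_nonneg_right hθqκ (abs_nonneg (pdx sol.θ y t))
          have h2 := mul_le_mul_of_nonneg_left h hq1.le
          nlinarith [h2]
      _ = (q + 1) * C₀ * (κ (sol.θ y t) * |pdx sol.θ y t|) := by ring
      _ ≤ (q + 1) * C₀ * (lam / 2 + ((κ (sol.θ y t)) ^ 2 * (pdx sol.θ y t) ^ 2) / (2 * lam)) := by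
          have : (0:ℝ) ≤ (q+1) * C₀ := by positivity
          nlinarith
      _ = (q + 1) * C₀ * lam / 2
          + ((q + 1) * C₀ / (2 * lam)) * ((κ (sol.θ y t)) ^ 2 * (pdx sol.θ y t) ^ 2) := by
          field_simp
  -- step G : maximum point and FTC
  obtain ⟨xs, hxsm, hxs⟩ := isCompact_Icc.exists_isMaxOn (f := fun y => sol.θ y t)
    (Set.nonempty_Icc.mpr h01) ((hθc t).continuousOn)
  have hsup : sSup ((fun x => sol.θ x t) '' Set.Icc (0:ℝ) 1) = sol.θ xs t := by
    refine IsGreatest.csSup_eq ⟨Set.mem_image_of_mem _ hxsm, ?_⟩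
    rintro z ⟨y, hy, rfl⟩
    exact hxs hy
  have hcont_h : ContinuousOn (fun y => (q + 1) * sol.θ y t ^ q * pdx sol.θ y t)
      (Set.Icc 0 1) := by
    refine (continuousOn_const.mul ((hθc t).continuousOn.rpow_const ?_)).mul
      (hθxc t).continuousOn
    exact fun y hy => Or.inl (sol.θ_pos y hy t ht).ne'
  have hDθ : ∀ y ∈ Set.uIcc y₀ xs, HasDerivAt (fun y => sol.θ y t ^ (q + 1))
      ((q + 1) * sol.θ y t ^ q * pdx sol.θ y t) y := by
    intro y hy
    have hpos := sol.θ_pos y (Set.uIcc_subset_Icc hy₀m hxsm hy) t ht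
    have h := (Real.hasDerivAt_rpow_const (p := q + 1)
      (Or.inl hpos.ne')).comp y (hasDerivAt_pdx sol.smooth_θ y t)
    simpa [Function.comp_def, add_sub_cancel_right] using h
  have hFTCθ : (∫ y in y₀..xs, (q + 1) * sol.θ y t ^ q * pdx sol.θ y t)
      = sol.θ xs t ^ (q + 1) - sol.θ y₀ t ^ (q + 1) :=
    intervalIntegral.integral_eq_sub_of_hasDerivAt hDθ
      (ContinuousOn.intervalIntegrable (hcont_h.mono (Set.uIcc_subset_Icc hy₀m hxsm)))
  -- assembling
  have habsle : |∫ y in y₀..xs, (q + 1) * sol.θ y t ^ q * pdx sol.θ y t|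
      ≤ ∫ y in (0:ℝ)..1, |(q + 1) * sol.θ y t ^ q * pdx sol.θ y t| :=
    abs_ival hy₀m hxsm hcont_h
  have hIbound : (∫ y in (0:ℝ)..1, |(q + 1) * sol.θ y t ^ q * pdx sol.θ y t|)
      ≤ (q + 1) * C₀ * lam / 2 + ((q + 1) * C₀ / (2 * lam)) * J := by
    have step1 := intervalIntegral.integral_mono_on (μ := volume) h01
      (ContinuousOn.intervalIntegrable (by rw [Set.uIcc_of_le h01]; exact hcont_h.abs))
      (intervalIntegrable_const.add
        ((hJint.const_mul ((q + 1) * C₀ / (2 * lam)))))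
      hptw
    have step2 : (∫ y in (0:ℝ)..1, ((q + 1) * C₀ * lam / 2
        + ((q + 1) * C₀ / (2 * lam)) * ((κ (sol.θ y t)) ^ 2 * (pdx sol.θ y t) ^ 2)))
        = (q + 1) * C₀ * lam / 2 + ((q + 1) * C₀ / (2 * lam)) * J := by
      rw [intervalIntegral.integral_add intervalIntegrable_const
        ((hJint.const_mul ((q + 1) * C₀ / (2 * lam)))),
        intervalIntegral.integral_const_mul, hJ]
      simp
    rw [step2] at step1
    exact step1
  have hlamle : lam ≤ 1 + Real.sqrt J := by
    rw [hlam]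
    exact max_le (by nlinarith [Real.sqrt_nonneg J]) (by nlinarith)
  have hmaxpow : sol.θ xs t ^ (q + 1)
      ≤ (max 1 (EB / M)) ^ (q + 1) + (q + 1) * C₀ * lam := by
    have h1 : sol.θ y₀ t ^ (q + 1) ≤ (max 1 (EB / M)) ^ (q + 1) :=
      Real.rpow_le_rpow hθy₀pos.le (le_trans hmin_le (le_max_right _ _)) hq1.le
    have h2 : (q + 1) * C₀ / (2 * lam) * J ≤ (q + 1) * C₀ * lam / 2 := by
      rw [div_mul_eq_mul_div, div_le_div_iff₀ (by positivity) (by positivity)]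
      nlinarith [mul_nonneg (mul_nonneg hq1.le hC₀pos.le) (sub_nonneg.mpr hJlam)]
    have h4 : (∫ y in y₀..xs, (q + 1) * sol.θ y t ^ q * pdx sol.θ y t)
        ≤ (q + 1) * C₀ * lam / 2 + (q + 1) * C₀ / (2 * lam) * J :=
      le_trans (le_abs_self _) (le_trans habsle hIbound)
    linarith [hFTCθ.symm.le, h1, h2, h4, hFTCθ.ge]
  rw [hsup, ← hJ]
  have hfin : (q + 1) * C₀ * lam ≤ (q + 1) * C₀ * (1 + Real.sqrt J) :=
    mul_le_mul_of_nonneg_left hlamle (by positivity)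
  have hrnn : 0 ≤ Real.sqrt J := Real.sqrt_nonneg J
  calc sol.θ xs t ^ (q + 1)
      ≤ (max 1 (EB / M)) ^ (q + 1) + (q + 1) * C₀ * (1 + Real.sqrt J) := by linarith
    _ ≤ C * (1 + Real.sqrt J) := by
        rw [hC]
        nlinarith [hrpow1]
end
end
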